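/- arXiv:2508.12816 — 9 statements merged into one kernel-verified Lean document; each statement's English description precedes it below -/
import Mathlib

section
/- Let λ ∈ ℝ with 0 < λ, and let h, k, u be positive real numbers with h²·k·u·λ < 4. Then the real 2×2 matrix M = [[1 − h²kuλ, hk], [−huλ, 1]] has determinant 1 and trace 2 − h²kuλ of absolute value strictly less than 2; consequently, its characteristic polynomial has two distinct non-real complex roots, and every complex eigenvalue of M has modulus exactly 1. -/
open Polynomial Matrix ComplexConjugate

/-! A real `2 × 2` matrix with determinant `1` has characteristic polynomial `X² - tX + 1`,
`t` its trace. When `|t| < 2` the discriminant `t² - 4` is negative, so the two roots are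
complex conjugates `z, z̄` with `z z̄ = |z|² = 1`. For the symplectic Euler matrix the
determinant is `1` identically and `t = 2 - h²kuλ`, so `0 < h²kuλ < 4` is exactly `|t| < 2`. -/

lemma Complex.exists_norm_eq_one_re_eq_of_abs_lt_two {t : ℝ} (ht : |t| < 2) :
    ∃ z : ℂ, 0 < z.im ∧ ‖z‖ = 1 ∧ 2 * z.re = t := by
  have hsq : (t / 2) ^ 2 < 1 := by
    rw [div_pow]
    nlinarith [sq_abs t, abs_nonneg t]
  refine ⟨⟨t / 2, √(1 - (t / 2) ^ 2)⟩, Real.sqrt_pos.mpr (by linarith), ?_, by simp; ring⟩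
  rw [Complex.norm_def, Complex.normSq_mk, ← sq, ← sq, Real.sq_sqrt (by linarith)]
  simp

lemma Complex.X_sq_sub_two_re_mul_X_add_one_eq {z : ℂ} (hz : ‖z‖ = 1) :
    (X ^ 2 - C (2 * z.re : ℂ) * X + 1 : ℂ[X]) = (X - C z) * (X - C (conj z)) := by
  have hsum : (2 * z.re : ℂ) = z + conj z := by
    rw [Complex.add_conj]; push_cast; ring
  have hprod : z * conj z = 1 := by
    rw [Complex.mul_conj, Complex.normSq_eq_norm_sq, hz]; simp
  rw [hsum, map_add, ← map_one C, ← hprod, map_mul]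
  ring

theorem Matrix.exists_charpoly_map_complex_eq_of_det_eq_one {A : Matrix (Fin 2) (Fin 2) ℝ}
    (hdet : A.det = 1) (htr : |A.trace| < 2) :
    ∃ z : ℂ, 0 < z.im ∧ ‖z‖ = 1 ∧
      (A.map (algebraMap ℝ ℂ)).charpoly = (X - C z) * (X - C (conj z)) := by
  obtain ⟨z, him, hnorm, hre⟩ := Complex.exists_norm_eq_one_re_eq_of_abs_lt_two htr
  refine ⟨z, him, hnorm, ?_⟩
  rw [← Complex.X_sq_sub_two_re_mul_X_add_one_eq hnorm, charpoly_map, charpoly_fin_two, hdet,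
    ← hre]
  simp

/-- the per-eigenvalue stability matrix of the symplectic Euler scheme
has determinant 1, trace `2 - h²kuλ` of absolute value `< 2`, its characteristic
polynomial has two distinct non-real complex roots, and every complex eigenvalue
has modulus exactly 1. -/
theorem stmt0 (lam h k u : ℝ) (hlam : 0 < lam) (hh : 0 < h) (hk : 0 < k) (hu : 0 < u)
    (hstab : h ^ 2 * k * u * lam < 4) :
    let M : Matrix (Fin 2) (Fin 2) ℝ :=
      !![1 - h ^ 2 * k * u * lam, h * k; -(h * u * lam), 1]
    M.det = 1 ∧ M.trace = 2 - h ^ 2 * k * u * lam ∧ |M.trace| < 2 ∧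
      (∃ z₁ z₂ : ℂ, z₁ ≠ z₂ ∧ z₁.im ≠ 0 ∧ z₂.im ≠ 0 ∧
        (M.map (algebraMap ℝ ℂ)).charpoly = (X - Polynomial.C z₁) * (X - Polynomial.C z₂)) ∧
      (∀ z : ℂ, (M.map (algebraMap ℝ ℂ)).charpoly.IsRoot z → ‖z‖ = 1) := by
  intro M
  have hpos : 0 < h ^ 2 * k * u * lam := by positivity
  have hdet : M.det = 1 := by simp [M, det_fin_two_of]; ring
  have htr : M.trace = 2 - h ^ 2 * k * u * lam := by simp [M, trace_fin_two_of]; ring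
  have habs : |M.trace| < 2 := by rw [htr, abs_lt]; constructor <;> linarith
  obtain ⟨z, him, hnorm, hcp⟩ := exists_charpoly_map_complex_eq_of_det_eq_one hdet habs
  refine ⟨hdet, htr, habs, ⟨z, conj z, ?_, him.ne', by simpa using him.ne', hcp⟩, ?_⟩
  · intro hz
    have := congrArg Complex.im hz
    rw [Complex.conj_im] at this
    linarith
  · intro w hw
    rw [hcp, IsRoot, eval_mul, mul_eq_zero] at hw
    rcases hw with hw | hw <;> simp only [eval_sub, eval_X, eval_C, sub_eq_zero] at hw <;>
      simp [hw, hnorm]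
end

section
/- Let d ∈ ℕ, h ∈ ℝ, and let N : ℝ → ℝ be twice differentiable. Define g : (ℝ^d × ℝ^d × ℝ × ℝ) → (ℝ^d × ℝ^d × ℝ × ℝ) by g(x, y, t, ε) = (x + N(t)·y, y, t + h, ε − (1/2)·N'(t)·‖y‖²). Then g is differentiable and preserves the canonical symplectic bilinear form: for every point p and every pair of tangent vectors v = (δx, δy, δt, δε) and w = (δx', δy', δt', δε'), one has ω(Dg_p v, Dg_p w) = ω(v, w), where ω((δx, δy, δt, δε), (δx', δy', δt', δε')) = ⟨δy', δx⟩ − ⟨δy, δx'⟩ + δε'·δt − δε·δt' and Dg_p denotes the Fréchet derivative of g at p. -/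
/-!
At `(x, y, t, ε)` the derivative of `g` is
`δ ↦ (δx + N t • δy + (N' t δt) • y, δy, δt, δε - ½ N'' t δt ‖y‖² - N' t ⟪y, δy⟫)`,
a shear whose cross terms cancel in `ω` in pairs: the `y`-direction added to `δx` is paired
against the `⟪y, δy⟫` correction of `δε`, the term `N t • δy` contributes the symmetric
`⟪δy, δy'⟫`, and the `δt δt'` term is symmetric.
-/

open RealInnerProductSpace

/-- The coordinate expression of the canonical symplectic 2-form
`Σᵢ dyᵢ ∧ dxᵢ + dε ∧ dt` on `ℝ^d × ℝ^d × ℝ × ℝ`. -/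
noncomputable def canonicalSymplecticForm (d : ℕ)
    (v w : EuclideanSpace ℝ (Fin d) × EuclideanSpace ℝ (Fin d) × ℝ × ℝ) : ℝ :=
  ⟪w.2.1, v.1⟫ - ⟪v.2.1, w.1⟫ + w.2.2.2 * v.2.2.1 - v.2.2.2 * w.2.2.1

section

variable {E : Type*} [NormedAddCommGroup E] [InnerProductSpace ℝ E]

def symplecticForm (v w : E × E × ℝ × ℝ) : ℝ :=
  ⟪w.2.1, v.1⟫ - ⟪v.2.1, w.1⟫ + w.2.2.2 * v.2.2.1 - v.2.2.2 * w.2.2.1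

def symplecticShear (a b c : ℝ) (y : E) (v : E × E × ℝ × ℝ) : E × E × ℝ × ℝ :=
  (v.1 + a • v.2.1 + (v.2.2.1 * b) • y, v.2.1, v.2.2.1, v.2.2.2 - c * v.2.2.1 - b * ⟪y, v.2.1⟫)

theorem symplecticForm_symplecticShear (a b c : ℝ) (y : E) (v w : E × E × ℝ × ℝ) :
    symplecticForm (symplecticShear a b c y v) (symplecticShear a b c y w) =
      symplecticForm v w := by
  simp only [symplecticForm, symplecticShear, inner_add_right, inner_smul_right]
  rw [real_inner_comm v.2.1 w.2.1, real_inner_comm y v.2.1, real_inner_comm y w.2.1]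
  ring

noncomputable def quadratureFlow (N : ℝ → ℝ) (h : ℝ) (p : E × E × ℝ × ℝ) : E × E × ℝ × ℝ :=
  (p.1 + N p.2.2.1 • p.2.1, p.2.1, p.2.2.1 + h, p.2.2.2 - (1 / 2) * deriv N p.2.2.1 * ‖p.2.1‖ ^ 2)

theorem hasFDerivAt_quadratureFlow {N : ℝ → ℝ} (h : ℝ) {p : E × E × ℝ × ℝ}
    (hN : DifferentiableAt ℝ N p.2.2.1) (hN' : DifferentiableAt ℝ (deriv N) p.2.2.1) :
    ∃ D : (E × E × ℝ × ℝ) →L[ℝ] E × E × ℝ × ℝ, HasFDerivAt (quadratureFlow N h) D p ∧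
      ⇑D = symplecticShear (N p.2.2.1) (deriv N p.2.2.1)
        (1 / 2 * deriv (deriv N) p.2.2.1 * ‖p.2.1‖ ^ 2) p.2.1 := by
  have hx : HasFDerivAt (𝕜 := ℝ) (fun q : E × E × ℝ × ℝ => q.1) _ p := hasFDerivAt_fst
  have hy : HasFDerivAt (𝕜 := ℝ) (fun q : E × E × ℝ × ℝ => q.2.1) _ p :=
    hasFDerivAt_fst.comp p hasFDerivAt_snd
  have ht : HasFDerivAt (𝕜 := ℝ) (fun q : E × E × ℝ × ℝ => q.2.2.1) _ p :=
    hasFDerivAt_fst.comp p (hasFDerivAt_snd.comp p hasFDerivAt_snd)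
  have he : HasFDerivAt (𝕜 := ℝ) (fun q : E × E × ℝ × ℝ => q.2.2.2) _ p :=
    hasFDerivAt_snd.comp p (hasFDerivAt_snd.comp p hasFDerivAt_snd)
  have hNt := hN.hasDerivAt.hasFDerivAt.comp p ht
  have hN't := hN'.hasDerivAt.hasFDerivAt.comp p ht
  refine ⟨_, (hx.add (hNt.smul hy)).prodMk (hy.prodMk ((ht.add_const h).prodMk
    (he.sub ((hN't.const_mul (1 / 2)).mul hy.norm_sq)))), ?_⟩
  ext v
  all_goals simp [symplecticShear, add_assoc]
  ring

theorem fderiv_quadratureFlow {N : ℝ → ℝ} (h : ℝ) {p : E × E × ℝ × ℝ}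
    (hN : DifferentiableAt ℝ N p.2.2.1) (hN' : DifferentiableAt ℝ (deriv N) p.2.2.1) :
    ⇑(fderiv ℝ (quadratureFlow N h) p) = symplecticShear (N p.2.2.1) (deriv N p.2.2.1)
        (1 / 2 * deriv (deriv N) p.2.2.1 * ‖p.2.1‖ ^ 2) p.2.1 := by
  obtain ⟨D, hD, hDeq⟩ := hasFDerivAt_quadratureFlow h hN hN'
  rw [hD.fderiv, hDeq]

theorem differentiable_quadratureFlow {N : ℝ → ℝ} (h : ℝ) (hN : Differentiable ℝ N)
    (hN' : Differentiable ℝ (deriv N)) : Differentiable ℝ (quadratureFlow (E := E) N h) :=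
  fun p => (hasFDerivAt_quadratureFlow h (hN p.2.2.1) (hN' p.2.2.1)).choose_spec.1.differentiableAt

end

/-- the numerical substitute for the flow of the Hamiltonian subsystem,
`g(x, y, t, ε) = (x + N(t)·y, y, t + h, ε − (1/2)·N'(t)·‖y‖²)`, is differentiable and
its derivative preserves the canonical symplectic bilinear form at every point. -/
theorem stmt3 (d : ℕ) (h : ℝ) (N : ℝ → ℝ)
    (hN : Differentiable ℝ N) (hN' : Differentiable ℝ (deriv N)) :
    let g : (EuclideanSpace ℝ (Fin d) × EuclideanSpace ℝ (Fin d) × ℝ × ℝ) →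
        (EuclideanSpace ℝ (Fin d) × EuclideanSpace ℝ (Fin d) × ℝ × ℝ) :=
      fun p => (p.1 + N p.2.2.1 • p.2.1, p.2.1, p.2.2.1 + h,
        p.2.2.2 - (1 / 2) * deriv N p.2.2.1 * ‖p.2.1‖ ^ 2)
    Differentiable ℝ g ∧
      ∀ p v w, canonicalSymplecticForm d (fderiv ℝ g p v) (fderiv ℝ g p w) =
        canonicalSymplecticForm d v w := by
  refine ⟨differentiable_quadratureFlow h hN hN', fun p v w => ?_⟩
  show symplecticForm (fderiv ℝ (quadratureFlow N h) p v) (fderiv ℝ (quadratureFlow N h) p w) = _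
  rw [fderiv_quadratureFlow h (hN _) (hN' _)]
  exact symplecticForm_symplecticShear _ _ _ _ v w
end

section
/- Let f : ℝ^d → ℝ be convex and continuously differentiable with a minimizer x* and f* = f(x*). Let r > 0, 0 ≤ α ≤ 1, t₀ > 0, and set ξ'(t) = r/t^α. Let A, B, C, D : [t₀, ∞) → [0, ∞) be differentiable and satisfy, for all t ≥ t₀: (I′) (1/2)·D'(t) − ξ'(t)·D(t) + A(t)B(t) ≤ 0; (II₁′) B(t)·B'(t) ≤ 0; (II₂′) D'(t) − A(t)B(t) ≤ 0; (III′) D(t) − A(t)² − C(t) = 0; (IV′) (d/dt)(A(t)B(t)) − ξ'(t)·A(t)B(t) + B(t)² = 0. Then for every twice differentiable solution x : [t₀, ∞) → ℝ^d of ẍ(t) + (r/t^α)·ẋ(t) + ∇f(x(t)) = 0, the function L(t) = (1/2)‖A(t)ẋ(t) + B(t)(x(t) − x*)‖² + (1/2)C(t)‖ẋ(t)‖² + D(t)(f(x(t)) − f*) satisfies L'(t) ≤ 0 for all t ≥ t₀. -/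
/-!
Along a solution of `ẍ + ξ ẋ + ∇f(x) = 0` with `ξ = r/t^α`, substituting the equation for `ẍ`
turns `L'` into a quadratic form in `ẋ` and `x - x*` plus the terms coming from `f`. Using (III′)
to write `C = D - A²`, the `⟪∇f(x), ẋ⟫` terms cancel and
`L' = (½D' - ξD + AB)‖ẋ‖² + BB'‖x - x*‖² + ((AB)' - ξAB + B²)⟪ẋ, x - x*⟫`
  `+ D'(f - f*) - AB⟪∇f(x), x - x*⟫`.
The first three coefficients are controlled by (I′), (II₁′), (IV′); convexity gives
`f - f* ≤ ⟪∇f(x), x - x*⟫`, so the last two terms are at most `(D' - AB)(f - f*) ≤ 0` by (II₂′).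
-/

open RealInnerProductSpace

section Lyapunov

variable {E : Type*} [NormedAddCommGroup E] [InnerProductSpace ℝ E]

theorem lyapunov_deriv_eq {v y g a : E} {ξ A B D A' B' D' F : ℝ} (ha : a + ξ • v + g = 0) :
    ⟪A • v + B • y, A • a + A' • v + (B • v + B' • y)⟫
        + (1 / 2 * (D' - 2 * A * A') * ‖v‖ ^ 2 + (D - A ^ 2) * ⟪v, a⟫)
        + (D' * F + D * ⟪g, v⟫)
      = (1 / 2 * D' - ξ * D + A * B) * ‖v‖ ^ 2 + B * B' * ‖y‖ ^ 2
        + (A' * B + A * B' - ξ * (A * B) + B ^ 2) * ⟪v, y⟫ + (D' * F - A * B * ⟪g, y⟫) := by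
  obtain rfl : a = -(ξ • v + g) := by rw [eq_neg_iff_add_eq_zero, ← add_assoc, ha]
  simp only [inner_add_left, inner_add_right, inner_neg_right, real_inner_smul_left,
    real_inner_smul_right, real_inner_self_eq_norm_sq]
  rw [real_inner_comm y v, real_inner_comm v g, real_inner_comm y g]
  ring

theorem lyapunov_deriv_nonpos {v y g a : E} {ξ A B D A' B' D' F : ℝ} (ha : a + ξ • v + g = 0)
    (hAB : 0 ≤ A * B) (hF : 0 ≤ F) (hFg : F ≤ ⟪g, y⟫)
    (hI : 1 / 2 * D' - ξ * D + A * B ≤ 0) (hII₁ : B * B' ≤ 0) (hII₂ : D' - A * B ≤ 0)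
    (hIV : A' * B + A * B' - ξ * (A * B) + B ^ 2 = 0) :
    ⟪A • v + B • y, A • a + A' • v + (B • v + B' • y)⟫
        + (1 / 2 * (D' - 2 * A * A') * ‖v‖ ^ 2 + (D - A ^ 2) * ⟪v, a⟫)
        + (D' * F + D * ⟪g, v⟫) ≤ 0 := by
  rw [lyapunov_deriv_eq ha, hIV, zero_mul, add_zero]
  have hv := mul_nonpos_of_nonpos_of_nonneg hI (sq_nonneg ‖v‖)
  have hy := mul_nonpos_of_nonpos_of_nonneg hII₁ (sq_nonneg ‖y‖)
  have hFgAB := mul_le_mul_of_nonneg_left hFg hAB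
  have hFD := mul_nonpos_of_nonpos_of_nonneg hII₂ hF
  linarith

theorem hasDerivWithinAt_lyapunov [CompleteSpace E] {f : E → ℝ} {g a xstar : E} {x v : ℝ → E}
    {A B D : ℝ → ℝ} {A' B' D' t : ℝ} {s : Set ℝ}
    (hf : HasGradientAt f g (x t)) (hx : HasDerivWithinAt x (v t) s t)
    (hv : HasDerivWithinAt v a s t) (hA : HasDerivWithinAt A A' s t)
    (hB : HasDerivWithinAt B B' s t) (hD : HasDerivWithinAt D D' s t) :
    HasDerivWithinAt (fun s => 1 / 2 * ‖A s • v s + B s • (x s - xstar)‖ ^ 2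
        + 1 / 2 * (D s - A s ^ 2) * ‖v s‖ ^ 2 + D s * (f (x s) - f xstar))
      (⟪A t • v t + B t • (x t - xstar), A t • a + A' • v t + (B t • v t + B' • (x t - xstar))⟫
        + (1 / 2 * (D' - 2 * A t * A') * ‖v t‖ ^ 2 + (D t - A t ^ 2) * ⟪v t, a⟫)
        + (D' * (f (x t) - f xstar) + D t * ⟪g, v t⟫)) s t := by
  have hw := ((hA.smul hv).add (hB.smul (hx.sub_const xstar))).norm_sq.const_mul (1 / 2)
  have hkin := ((hD.sub (hA.pow 2)).const_mul (1 / 2)).mul hv.norm_sq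
  have hpot := hD.mul ((hf.hasFDerivAt.comp_hasDerivWithinAt t hx).sub_const (f xstar))
  refine ((hw.add hkin).add hpot).congr_deriv ?_
  simp only [Pi.add_apply, Pi.smul_apply', Pi.sub_apply, Pi.pow_apply, Function.comp_apply,
    InnerProductSpace.toDual_apply_apply]
  ring

end Lyapunov

theorem stmt6_general (d : ℕ) (f : EuclideanSpace ℝ (Fin d) → ℝ) (hf : ContDiff ℝ 1 f)
    (hconv : ∀ z y : EuclideanSpace ℝ (Fin d), 0 ≤ f y - f z - ⟪gradient f z, y - z⟫)
    (xstar : EuclideanSpace ℝ (Fin d)) (hmin : ∀ y, f xstar ≤ f y)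
    (r α t₀ : ℝ)
    (A B C D A' B' D' : ℝ → ℝ)
    (hA : ∀ t ∈ Set.Ici t₀, HasDerivWithinAt A (A' t) (Set.Ici t₀) t)
    (hB : ∀ t ∈ Set.Ici t₀, HasDerivWithinAt B (B' t) (Set.Ici t₀) t)
    (hD : ∀ t ∈ Set.Ici t₀, HasDerivWithinAt D (D' t) (Set.Ici t₀) t)
    (hApos : ∀ t ∈ Set.Ici t₀, 0 ≤ A t) (hBpos : ∀ t ∈ Set.Ici t₀, 0 ≤ B t)
    (hI : ∀ t ∈ Set.Ici t₀, (1 / 2) * D' t - (r / t ^ α) * D t + A t * B t ≤ 0)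
    (hII₁ : ∀ t ∈ Set.Ici t₀, B t * B' t ≤ 0)
    (hII₂ : ∀ t ∈ Set.Ici t₀, D' t - A t * B t ≤ 0)
    (hIII : ∀ t ∈ Set.Ici t₀, D t - A t ^ 2 - C t = 0)
    (hIV : ∀ t ∈ Set.Ici t₀,
      (A' t * B t + A t * B' t) - (r / t ^ α) * (A t * B t) + B t ^ 2 = 0)
    (x v a : ℝ → EuclideanSpace ℝ (Fin d))
    (hx : ∀ t ∈ Set.Ici t₀, HasDerivWithinAt x (v t) (Set.Ici t₀) t)
    (hv : ∀ t ∈ Set.Ici t₀, HasDerivWithinAt v (a t) (Set.Ici t₀) t)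
    (hode : ∀ t ∈ Set.Ici t₀, a t + (r / t ^ α) • v t + gradient f (x t) = 0) :
    ∀ t ∈ Set.Ici t₀, ∃ L' : ℝ,
      HasDerivWithinAt (fun s =>
        (1 / 2) * ‖A s • v s + B s • (x s - xstar)‖ ^ 2
          + (1 / 2) * C s * ‖v s‖ ^ 2 + D s * (f (x s) - f xstar)) L' (Set.Ici t₀) t ∧
      L' ≤ 0 := by
  intro t ht
  have hgrad : HasGradientAt f (gradient f (x t)) (x t) :=
    ((hf.differentiable one_ne_zero) (x t)).hasGradientAt
  have hC_eq : ∀ s ∈ Set.Ici t₀, C s = D s - A s ^ 2 := fun s hs => by linarith [hIII s hs]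
  have hconv_t : f (x t) - f xstar ≤ ⟪gradient f (x t), x t - xstar⟫ := by
    have := hconv (x t) xstar
    rw [← neg_sub (x t), inner_neg_right] at this
    linarith
  refine ⟨_, ?_, lyapunov_deriv_nonpos (hode t ht) (mul_nonneg (hApos t ht) (hBpos t ht))
    (sub_nonneg.2 (hmin _)) hconv_t (hI t ht) (hII₁ t ht) (hII₂ t ht) (hIV t ht)⟩
  exact (hasDerivWithinAt_lyapunov hgrad (hx t ht) (hv t ht) (hA t ht) (hB t ht)
    (hD t ht)).congr_of_mem (fun s hs => by rw [hC_eq s hs]) ht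

/-- if the differentiable nonnegative coefficient functions
`A, B, C, D` satisfy conditions (I′), (II₁′), (II₂′), (III′), (IV′), then the
Lyapunov function `L` is differentiable with nonpositive derivative along every
solution of the (α, r)-damped system `ẍ + (r/t^α)ẋ + ∇f(x) = 0` on `[t₀, ∞)`. -/
theorem stmt6 (d : ℕ) (f : EuclideanSpace ℝ (Fin d) → ℝ) (hf : ContDiff ℝ 1 f)
    (hconv : ∀ z y : EuclideanSpace ℝ (Fin d), 0 ≤ f y - f z - ⟪gradient f z, y - z⟫)
    (xstar : EuclideanSpace ℝ (Fin d)) (hmin : ∀ y, f xstar ≤ f y)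
    (r α t₀ : ℝ) (hr : 0 < r) (hα0 : 0 ≤ α) (hα1 : α ≤ 1) (ht₀ : 0 < t₀)
    (A B C D A' B' C' D' : ℝ → ℝ)
    (hA : ∀ t ∈ Set.Ici t₀, HasDerivWithinAt A (A' t) (Set.Ici t₀) t)
    (hB : ∀ t ∈ Set.Ici t₀, HasDerivWithinAt B (B' t) (Set.Ici t₀) t)
    (hC : ∀ t ∈ Set.Ici t₀, HasDerivWithinAt C (C' t) (Set.Ici t₀) t)
    (hD : ∀ t ∈ Set.Ici t₀, HasDerivWithinAt D (D' t) (Set.Ici t₀) t)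
    (hApos : ∀ t ∈ Set.Ici t₀, 0 ≤ A t) (hBpos : ∀ t ∈ Set.Ici t₀, 0 ≤ B t)
    (hCpos : ∀ t ∈ Set.Ici t₀, 0 ≤ C t) (hDpos : ∀ t ∈ Set.Ici t₀, 0 ≤ D t)
    (hI : ∀ t ∈ Set.Ici t₀, (1 / 2) * D' t - (r / t ^ α) * D t + A t * B t ≤ 0)
    (hII₁ : ∀ t ∈ Set.Ici t₀, B t * B' t ≤ 0)
    (hII₂ : ∀ t ∈ Set.Ici t₀, D' t - A t * B t ≤ 0)
    (hIII : ∀ t ∈ Set.Ici t₀, D t - A t ^ 2 - C t = 0)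
    (hIV : ∀ t ∈ Set.Ici t₀,
      (A' t * B t + A t * B' t) - (r / t ^ α) * (A t * B t) + B t ^ 2 = 0)
    (x v a : ℝ → EuclideanSpace ℝ (Fin d))
    (hx : ∀ t ∈ Set.Ici t₀, HasDerivWithinAt x (v t) (Set.Ici t₀) t)
    (hv : ∀ t ∈ Set.Ici t₀, HasDerivWithinAt v (a t) (Set.Ici t₀) t)
    (hode : ∀ t ∈ Set.Ici t₀, a t + (r / t ^ α) • v t + gradient f (x t) = 0) :
    ∀ t ∈ Set.Ici t₀, ∃ L' : ℝ,
      HasDerivWithinAt (fun s =>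
        (1 / 2) * ‖A s • v s + B s • (x s - xstar)‖ ^ 2
          + (1 / 2) * C s * ‖v s‖ ^ 2 + D s * (f (x s) - f xstar)) L' (Set.Ici t₀) t ∧
      L' ≤ 0 :=
  stmt6_general d f hf hconv xstar hmin r α t₀ A B C D A' B' D' hA hB hD hApos hBpos hI hII₁ hII₂
    hIII hIV x v a hx hv hode
end

section
/- Let r > 0, 0 ≤ α < 1, and 0 < β ≤ 1/2, and define for t > 0: ξ(t) = (r/(1−α))·t^{1−α}, D(t) = e^{βξ(t)}, B(t) = √(βr·[(1−β)r·t^{1−α} + α]·t^{−α−1}·e^{βξ(t)}), A(t) = √((βr·t^{1−α}/((1−β)r·t^{1−α} + α))·e^{βξ(t)}), and C(t) = [1 − βr·t^{1−α}/((1−β)r·t^{1−α} + α)]·e^{βξ(t)}. Then for all t > 0: (a) A(t)·B(t) = D'(t); (b) A(t)² + C(t) = D(t); (c) (d/dt)(A(t)B(t)) − ξ'(t)·A(t)B(t) + B(t)² = 0; (d) (3/2)·D'(t) − ξ'(t)·D(t) ≤ 0; and (e) A(t) ≥ 0, B(t) ≥ 0, C(t) ≥ 0, D(t) > 0. -/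
/-!
The radicands of `A` and `B` multiply to the perfect square `(β ξ' D)²`, so
`A B = β ξ' D = D'` with `ξ' = r / t ^ α`. After writing `t ^ (1 - α) = t / t ^ α` and
`t ^ (-α - 1) = (t ^ α)⁻¹ / t`, every identity becomes a rational identity in `t`, `t ^ α`
and `D`. The two inequalities are where `β ≤ 1 / 2` enters: `(d)` reads
`(3β/2 - 1) ξ' D ≤ 0`, and `C ≥ 0` reads `β r t^(1-α) ≤ (1 - β) r t^(1-α) + α`.
-/

open Real

lemma Real.sqrt_mul_sqrt_eq_of_mul_eq_sq {x y c : ℝ} (hx : 0 ≤ x) (hc : 0 ≤ c)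
    (h : x * y = c ^ 2) : √x * √y = c := by
  rw [← Real.sqrt_mul hx, h, Real.sqrt_sq hc]

lemma Real.rpow_neg_sub_one {t : ℝ} (ht : 0 < t) (α : ℝ) :
    t ^ (-α - 1) = (t ^ α)⁻¹ / t := by
  rw [rpow_sub_one ht.ne', rpow_neg ht.le]

lemma hasDerivAt_div_rpow_const {t : ℝ} (ht : 0 < t) (r α : ℝ) :
    HasDerivAt (fun s => r / s ^ α) (-(α * r / (t ^ α * t))) t := by
  have hp : 0 < t ^ α := rpow_pos_of_pos ht α
  have hderiv := (hasDerivAt_const t r).div (hasDerivAt_rpow_const (Or.inl ht.ne')) hp.ne'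
  refine hderiv.congr_deriv ?_
  rw [rpow_sub_one ht.ne']
  field_simp
  ring

namespace DampedLyapunov

variable (r α β : ℝ)

noncomputable def ξ (t : ℝ) : ℝ := r / (1 - α) * t ^ (1 - α)

noncomputable def D (t : ℝ) : ℝ := exp (β * ξ r α t)

noncomputable def Q (t : ℝ) : ℝ := (1 - β) * r * t ^ (1 - α) + α

noncomputable def A (t : ℝ) : ℝ := √(β * r * t ^ (1 - α) / Q r α β t * D r α β t)

noncomputable def B (t : ℝ) : ℝ := √(β * r * Q r α β t * t ^ (-α - 1) * D r α β t)

noncomputable def C (t : ℝ) : ℝ := (1 - β * r * t ^ (1 - α) / Q r α β t) * D r α β t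

lemma D_pos (t : ℝ) : 0 < D r α β t := exp_pos _

variable {r α β} {t : ℝ}

lemma hasDerivAt_ξ (hα : α ≠ 1) (ht : 0 < t) : HasDerivAt (ξ r α) (r / t ^ α) t := by
  have h1α : 1 - α ≠ 0 := sub_ne_zero.mpr hα.symm
  refine ((hasDerivAt_rpow_const (p := 1 - α) (Or.inl ht.ne')).const_mul
    (r / (1 - α))).congr_deriv ?_
  rw [sub_sub_cancel_left, rpow_neg ht.le]
  field_simp

lemma hasDerivAt_D (hα : α ≠ 1) (ht : 0 < t) :
    HasDerivAt (D r α β) (β * (r / t ^ α) * D r α β t) t := by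
  refine ((hasDerivAt_ξ hα ht).const_mul β).exp.congr_deriv ?_
  rw [D]
  ring

lemma Q_pos (hr : 0 < r) (hα : 0 ≤ α) (hβ : β < 1) (ht : 0 < t) : 0 < Q r α β t := by
  have := mul_pos (mul_pos (sub_pos.mpr hβ) hr) (rpow_pos_of_pos ht (1 - α))
  rw [Q]
  linarith

lemma A_mul_B (hr : 0 ≤ r) (hβ : 0 ≤ β) (hQ : 0 < Q r α β t) (ht : 0 < t) :
    A r α β t * B r α β t = β * (r / t ^ α) * D r α β t := by
  have hD := D_pos r α β t
  refine sqrt_mul_sqrt_eq_of_mul_eq_sq (by positivity) (by positivity) ?_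
  rw [rpow_sub ht 1 α, rpow_one, rpow_neg_sub_one ht]
  field_simp

lemma A_sq (hr : 0 ≤ r) (hβ : 0 ≤ β) (hQ : 0 < Q r α β t) (ht : 0 < t) :
    A r α β t ^ 2 = β * r * t ^ (1 - α) / Q r α β t * D r α β t :=
  sq_sqrt (by have := D_pos r α β t; positivity)

lemma B_sq (hr : 0 ≤ r) (hβ : 0 ≤ β) (hQ : 0 < Q r α β t) (ht : 0 < t) :
    B r α β t ^ 2 = β * r * Q r α β t * t ^ (-α - 1) * D r α β t :=
  sq_sqrt (by have := D_pos r α β t; positivity)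

lemma A_sq_add_C (hr : 0 ≤ r) (hβ : 0 ≤ β) (hQ : 0 < Q r α β t) (ht : 0 < t) :
    A r α β t ^ 2 + C r α β t = D r α β t := by
  rw [A_sq hr hβ hQ ht, C]
  ring

lemma hasDerivAt_A_mul_B (hr : 0 ≤ r) (hα : α ≠ 1) (hβ : 0 ≤ β)
    (hQ : ∀ s > 0, 0 < Q r α β s) (ht : 0 < t) :
    HasDerivAt (fun s => A r α β s * B r α β s)
      (r / t ^ α * (A r α β t * B r α β t) - B r α β t ^ 2) t := by
  have hAB : (fun s => A r α β s * B r α β s) =ᶠ[nhds t]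
      fun s => β * (r / s ^ α) * D r α β s := by
    filter_upwards [lt_mem_nhds ht] with s hs using A_mul_B hr hβ (hQ s hs) hs
  have hderiv := ((hasDerivAt_div_rpow_const ht r α).const_mul β).mul
    (hasDerivAt_D (r := r) (β := β) hα ht)
  refine (hderiv.congr_of_eventuallyEq hAB).congr_deriv ?_
  rw [A_mul_B hr hβ (hQ t ht) ht, B_sq hr hβ (hQ t ht) ht, Q, rpow_sub ht 1 α, rpow_one,
    rpow_neg_sub_one ht]
  field_simp
  ring

lemma three_halves_mul_A_mul_B_le (hr : 0 ≤ r) (hβ0 : 0 ≤ β) (hβ : β ≤ 1 / 2)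
    (hQ : 0 < Q r α β t) (ht : 0 < t) :
    3 / 2 * (A r α β t * B r α β t) - r / t ^ α * D r α β t ≤ 0 := by
  have hD := D_pos r α β t
  have : 0 ≤ (1 - 3 / 2 * β) * (r / t ^ α * D r α β t) := by
    have : 0 ≤ 1 - 3 / 2 * β := by linarith
    positivity
  rw [A_mul_B hr hβ0 hQ ht]
  linarith

lemma C_nonneg (hr : 0 ≤ r) (hα : 0 ≤ α) (hβ : β ≤ 1 / 2) (hQ : 0 < Q r α β t)
    (ht : 0 < t) : 0 ≤ C r α β t := by
  have hle : β * r * t ^ (1 - α) ≤ Q r α β t := by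
    have : 0 ≤ 1 - 2 * β := by linarith
    have : 0 ≤ (1 - 2 * β) * r * t ^ (1 - α) := by positivity
    rw [Q]
    linarith
  have := D_pos r α β t
  have : 0 ≤ 1 - β * r * t ^ (1 - α) / Q r α β t := sub_nonneg.mpr ((div_le_one hQ).mpr hle)
  rw [C]
  positivity

end DampedLyapunov

/-- properties of the Lyapunov coefficient functions `A, B, C, D`
for the (α, r)-damped system with `0 ≤ α < 1` and `0 < β ≤ 1/2`. -/
theorem stmt7 (r α β : ℝ) (hr : 0 < r) (hα0 : 0 ≤ α) (hα1 : α < 1)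
    (hβ0 : 0 < β) (hβ : β ≤ 1 / 2) :
    let ξ : ℝ → ℝ := fun t => r / (1 - α) * t ^ (1 - α)
    let D : ℝ → ℝ := fun t => Real.exp (β * ξ t)
    let B : ℝ → ℝ := fun t =>
      Real.sqrt (β * r * ((1 - β) * r * t ^ (1 - α) + α) * t ^ (-α - 1) * Real.exp (β * ξ t))
    let A : ℝ → ℝ := fun t =>
      Real.sqrt (β * r * t ^ (1 - α) / ((1 - β) * r * t ^ (1 - α) + α) * Real.exp (β * ξ t))
    let C : ℝ → ℝ := fun t =>
      (1 - β * r * t ^ (1 - α) / ((1 - β) * r * t ^ (1 - α) + α)) * Real.exp (β * ξ t)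
    ∀ t > (0 : ℝ),
      HasDerivAt D (A t * B t) t ∧
      A t ^ 2 + C t = D t ∧
      HasDerivAt (fun s => A s * B s) (r / t ^ α * (A t * B t) - B t ^ 2) t ∧
      (3 / 2) * (A t * B t) - r / t ^ α * D t ≤ 0 ∧
      0 ≤ A t ∧ 0 ≤ B t ∧ 0 ≤ C t ∧ 0 < D t := by
  intro ξ D B A C t ht
  open DampedLyapunov in
  have hQ : ∀ s > 0, 0 < Q r α β s := fun s hs => Q_pos hr hα0 (by linarith) hs
  open DampedLyapunov in
  exact ⟨(A_mul_B hr.le hβ0.le (hQ t ht) ht).symm ▸ hasDerivAt_D hα1.ne ht,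
    A_sq_add_C hr.le hβ0.le (hQ t ht) ht,
    hasDerivAt_A_mul_B hr.le hα1.ne hβ0.le hQ ht,
    three_halves_mul_A_mul_B_le hr.le hβ0.le hβ (hQ t ht) ht,
    sqrt_nonneg _, sqrt_nonneg _, C_nonneg hr.le hα0 hβ (hQ t ht) ht, D_pos r α β t⟩
end

section
/- Let r > 0, 0 ≤ α < 1, and 0 < β < 1. Define for t > 0: ξ(t) = (r/(1−α))·t^{1−α} and G(t) = B(t)² = βr·[(1−β)r·t^{1−α} + α]·t^{−α−1}·e^{βξ(t)}. Then for all t > 0, G'(t) = βr·[β(1−β)r²·t^{2(1−α)} − (2−3β)·rα·t^{1−α} − α(1+α)]·t^{−α−2}·e^{βξ(t)}, and there exists t* > 0 such that G'(t) > 0 for all t > t*. In particular, the condition B(t)·B'(t) ≤ 0 fails for all sufficiently large t. -/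
/-!
With `P = t ^ (1 - α)`, `G'(t)` is a positive factor times the quadratic
`β(1-β)r² P² - (2-3β)rα P - α(1+α)`, whose leading coefficient is positive. For `α < 1`,
`P → ∞` as `t → ∞`, so `G'` is eventually positive, and so is `G`. Wherever `G > 0`,
`√G · (√G)' = G' / 2`, which is then positive.
-/

open Real Filter

-- `phase r α` is the paper's `ξ`, and `coeffSq r α β` is `G = B²`.
noncomputable def phase (r α t : ℝ) : ℝ := r / (1 - α) * t ^ (1 - α)

noncomputable def coeffSq (r α β t : ℝ) : ℝ :=
  β * r * ((1 - β) * r * t ^ (1 - α) + α) * t ^ (-α - 1) * exp (β * phase r α t)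

noncomputable def coeffSqDeriv (r α β t : ℝ) : ℝ :=
  β * r * (β * (1 - β) * r ^ 2 * t ^ (2 * (1 - α)) - (2 - 3 * β) * r * α * t ^ (1 - α)
    - α * (1 + α)) * t ^ (-α - 2) * exp (β * phase r α t)

lemma rpow_two_mul {t : ℝ} (ht : 0 ≤ t) (y : ℝ) : t ^ (2 * y) = (t ^ y) ^ 2 := by
  rw [mul_comm, ← rpow_mul_natCast ht y 2]; norm_num

lemma coeffSqDeriv_eq (r α β : ℝ) {t : ℝ} (ht : 0 ≤ t) :
    coeffSqDeriv r α β t = β * r * (β * (1 - β) * r ^ 2 * (t ^ (1 - α)) ^ 2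
      - (2 - 3 * β) * r * α * t ^ (1 - α) - α * (1 + α)) * t ^ (-α - 2) * exp (β * phase r α t) := by
  rw [coeffSqDeriv, rpow_two_mul ht]

lemma hasDerivAt_rpow_one_sub (α : ℝ) {t : ℝ} (ht : 0 < t) :
    HasDerivAt (fun s : ℝ => s ^ (1 - α)) ((1 - α) * t ^ (-α)) t := by
  simpa using hasDerivAt_rpow_const (p := 1 - α) (Or.inl ht.ne')

lemma hasDerivAt_phase (r : ℝ) {α t : ℝ} (hα : α ≠ 1) (ht : 0 < t) :
    HasDerivAt (phase r α) (r * t ^ (-α)) t := by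
  refine ((hasDerivAt_rpow_one_sub α ht).const_mul (r / (1 - α))).congr_deriv ?_
  have : 1 - α ≠ 0 := sub_ne_zero.2 hα.symm
  field_simp

lemma hasDerivAt_coeffSq (r β : ℝ) {α t : ℝ} (hα : α ≠ 1) (ht : 0 < t) :
    HasDerivAt (coeffSq r α β) (coeffSqDeriv r α β t) t := by
  have hu := ((hasDerivAt_rpow_one_sub α ht).const_mul ((1 - β) * r)).add_const α
  have hv : HasDerivAt (fun s : ℝ => s ^ (-α - 1)) ((-α - 1) * t ^ (-α - 2)) t := by
    convert hasDerivAt_rpow_const (p := -α - 1) (Or.inl ht.ne') using 3; ring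
  have hw := ((hasDerivAt_phase r hα ht).const_mul β).exp
  refine (((hu.const_mul (β * r)).mul hv).mul hw).congr_deriv ?_
  have h1 : t ^ (1 - α) = t * t ^ (-α) := by
    rw [sub_eq_add_neg, rpow_add ht, rpow_one]
  have h2 : t ^ (-α - 1) = t ^ (-α) / t := rpow_sub_one ht.ne' _
  have h3 : t ^ (-α - 2) = t ^ (-α) / t ^ 2 := by
    exact_mod_cast rpow_sub_natCast ht.ne' (-α) 2
  simp only [Pi.mul_apply]
  rw [coeffSqDeriv_eq r α β ht.le, h1, h2, h3]
  field_simp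
  ring

lemma eventually_quadratic_pos {a : ℝ} (ha : 0 < a) (b c : ℝ) :
    ∀ᶠ x in atTop, 0 < a * x ^ 2 - b * x - c := by
  filter_upwards [eventually_ge_atTop 1, eventually_gt_atTop ((|b| + |c|) / a)] with x hx1 hxa
  have hlin : |b| + |c| < a * x := by rwa [div_lt_iff₀' ha] at hxa
  have hx0 : 0 ≤ x := by linarith
  linarith [mul_le_mul_of_nonneg_right (le_abs_self b) hx0,
    mul_le_mul_of_nonneg_left hx1 (abs_nonneg c), le_abs_self c,
    mul_pos (by linarith : 0 < x) (sub_pos.2 hlin)]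

lemma eventually_linear_pos {a : ℝ} (ha : 0 < a) (c : ℝ) :
    ∀ᶠ x in atTop, 0 < a * x + c :=
  ((tendsto_id.const_mul_atTop ha).atTop_add tendsto_const_nhds).eventually_gt_atTop 0

section Eventually

variable {r α β : ℝ}

lemma eventually_coeffSq_pos (hr : 0 < r) (hα : α < 1) (hβ0 : 0 < β) (hβ1 : β < 1) :
    ∀ᶠ t in atTop, 0 < coeffSq r α β t := by
  have hu := (tendsto_rpow_atTop (sub_pos.2 hα)).eventually
    (eventually_linear_pos (mul_pos (sub_pos.2 hβ1) hr) α)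
  filter_upwards [hu, eventually_gt_atTop 0] with t hu ht
  unfold coeffSq
  positivity

lemma eventually_coeffSqDeriv_pos (hr : 0 < r) (hα : α < 1) (hβ0 : 0 < β) (hβ1 : β < 1) :
    ∀ᶠ t in atTop, 0 < coeffSqDeriv r α β t := by
  have hq := (tendsto_rpow_atTop (sub_pos.2 hα)).eventually
    (eventually_quadratic_pos (by positivity : 0 < β * (1 - β) * r ^ 2)
      ((2 - 3 * β) * r * α) (α * (1 + α)))
  filter_upwards [hq, eventually_gt_atTop 0] with t hq ht
  rw [coeffSqDeriv_eq r α β ht.le]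
  positivity

end Eventually

lemma sqrt_mul_deriv_sqrt {f : ℝ → ℝ} {f' x : ℝ} (hf : HasDerivAt f f' x) (hx : 0 < f x) :
    √(f x) * deriv (fun s => √(f s)) x = f' / 2 := by
  rw [(hf.sqrt hx.ne').deriv]
  have := Real.sqrt_pos.2 hx
  field_simp

theorem stmt9_general (r α β : ℝ) (hr : 0 < r) (hα1 : α < 1)
    (hβ0 : 0 < β) (hβ1 : β < 1) :
    let ξ : ℝ → ℝ := fun t => r / (1 - α) * t ^ (1 - α)
    let G : ℝ → ℝ := fun t =>
      β * r * ((1 - β) * r * t ^ (1 - α) + α) * t ^ (-α - 1) * Real.exp (β * ξ t)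
    let G' : ℝ → ℝ := fun t =>
      β * r * (β * (1 - β) * r ^ 2 * t ^ (2 * (1 - α)) - (2 - 3 * β) * r * α * t ^ (1 - α)
        - α * (1 + α)) * t ^ (-α - 2) * Real.exp (β * ξ t)
    (∀ t > (0 : ℝ), HasDerivAt G (G' t) t) ∧
    ∃ tstar > (0 : ℝ), ∀ t > tstar, 0 < G' t ∧
      ¬ (Real.sqrt (G t) * deriv (fun s => Real.sqrt (G s)) t ≤ 0) := by
  show (∀ t > (0 : ℝ), HasDerivAt (coeffSq r α β) (coeffSqDeriv r α β t) t) ∧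
    ∃ tstar > (0 : ℝ), ∀ t > tstar, 0 < coeffSqDeriv r α β t ∧
      ¬ (√(coeffSq r α β t) * deriv (fun s => √(coeffSq r α β s)) t ≤ 0)
  have hderiv : ∀ t > (0 : ℝ), HasDerivAt (coeffSq r α β) (coeffSqDeriv r α β t) t :=
    fun t ht => hasDerivAt_coeffSq r β hα1.ne ht
  obtain ⟨t₀, ht₀⟩ := eventually_atTop.1 <|
    (eventually_coeffSq_pos hr hα1 hβ0 hβ1).and (eventually_coeffSqDeriv_pos hr hα1 hβ0 hβ1)
  refine ⟨hderiv, max t₀ 1, by positivity, fun t ht => ?_⟩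
  obtain ⟨hG, hG'⟩ := ht₀ t ((le_max_left _ _).trans ht.le)
  have ht1 : 1 < t := (le_max_right _ _).trans_lt ht
  refine ⟨hG', ?_⟩
  rw [sqrt_mul_deriv_sqrt (hderiv t (one_pos.trans ht1)) hG]
  linarith

/-- for `0 ≤ α < 1`, the derivative of `G = B²` has the stated
explicit form and is eventually positive, so the condition `B·B' ≤ 0` fails for
all sufficiently large times. -/
theorem stmt9 (r α β : ℝ) (hr : 0 < r) (hα0 : 0 ≤ α) (hα1 : α < 1)
    (hβ0 : 0 < β) (hβ1 : β < 1) :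
    let ξ : ℝ → ℝ := fun t => r / (1 - α) * t ^ (1 - α)
    let G : ℝ → ℝ := fun t =>
      β * r * ((1 - β) * r * t ^ (1 - α) + α) * t ^ (-α - 1) * Real.exp (β * ξ t)
    let G' : ℝ → ℝ := fun t =>
      β * r * (β * (1 - β) * r ^ 2 * t ^ (2 * (1 - α)) - (2 - 3 * β) * r * α * t ^ (1 - α)
        - α * (1 + α)) * t ^ (-α - 2) * Real.exp (β * ξ t)
    (∀ t > (0 : ℝ), HasDerivAt G (G' t) t) ∧
    ∃ tstar > (0 : ℝ), ∀ t > tstar, 0 < G' t ∧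
      ¬ (Real.sqrt (G t) * deriv (fun s => Real.sqrt (G s)) t ≤ 0) :=
  stmt9_general r α β hr hα1 hβ0 hβ1
end

section
/- Let f : ℝ^d → ℝ be twice continuously differentiable and μ-strongly convex (μ > 0) with minimizer x* and f* = f(x*). Let r > 0, 0 ≤ α < 1, and 0 < β ≤ 1/2; if α = 0, assume additionally r ≤ √(μ/(β(1−β))). Define for t > 0: ξ(t) = (r/(1−α))·t^{1−α}, D(t) = e^{βξ(t)}, B(t) = √(βr·[(1−β)r·t^{1−α} + α]·t^{−α−1}·e^{βξ(t)}), A(t) = √((βr·t^{1−α}/((1−β)r·t^{1−α} + α))·e^{βξ(t)}), C(t) = [1 − βr·t^{1−α}/((1−β)r·t^{1−α} + α)]·e^{βξ(t)}, and P(t) = μt² − (1−β)β·r²·t^{2(1−α)} + (2−3β)·rα·t^{1−α} + α(α+1). Let T > 0 be such that P(s) ≥ 0 for all s ≥ T. Then for every twice differentiable solution x of ẍ(t) + (r/t^α)·ẋ(t) + ∇f(x(t)) = 0 on [T, ∞), the function L(t) = (1/2)‖A(t)ẋ(t) + B(t)(x(t) − x*)‖² + (1/2)C(t)‖ẋ(t)‖²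 + D(t)(f(x(t)) − f*) satisfies, for all t ≥ T, L'(t) ≤ −[(1 − (3/2)β)·r·t^{−α}·‖ẋ(t)‖² + (1/2)·βr·P(t)·t^{−α−2}·‖x(t) − x*‖²]·e^{βξ(t)} ≤ 0; in particular L is nonincreasing on [T, ∞). -/
/-!
With `w = x - x*`, `γ t = r t^(-α)` and `b = lyapunovWeight`, one has `A² + C = D`, `AB = βγD` and
`B² = bD`, so `L = D (½‖ẋ‖² + βγ⟪ẋ, w⟫ + ½ b‖w‖² + f x - f x*)`. Since `D' = βγD` and
`b = β(1-β)γ² - βγ'`, differentiating along the ODE cancels every `⟪ẋ, w⟫` term and leaves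
`L' = D (-(1 - 3β/2)γ‖ẋ‖² + ½(b' + βγb)‖w‖² + βγ(f x - f x* - ⟪∇f x, w⟫))`.
Strong convexity bounds the last bracket by `-(μ/2)‖w‖²`, and `b' + βγb - μβγ = -βrP t^(-α-2)`,
so `P ≥ 0` on `[T, ∞)` makes `L'` nonpositive there.
-/

open RealInnerProductSpace

section DampedSystem

variable {E : Type*} [NormedAddCommGroup E] [InnerProductSpace ℝ E]

theorem sub_sub_inner_gradient_le_of_strongConvex [CompleteSpace E] {f : E → ℝ} {μ : ℝ}
    (hsc : ∀ z y : E, μ / 2 * ‖y - z‖ ^ 2 ≤ f y - f z - ⟪gradient f z, y - z⟫) (y z : E) :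
    f y - f z - ⟪gradient f y, y - z⟫ ≤ -(μ / 2 * ‖y - z‖ ^ 2) := by
  have h := hsc y z
  rw [← neg_sub y z, norm_neg, inner_neg_right] at h
  linarith

theorem half_norm_sqrt_smul_add_sqrt_smul_sq {p q e : ℝ} (hp : 0 ≤ p) (hq : 0 ≤ q) (he : 0 ≤ e)
    (v w : E) :
    1 / 2 * ‖√(p * e) • v + √(q * e) • w‖ ^ 2 + 1 / 2 * ((1 - p) * e) * ‖v‖ ^ 2
      = e * (1 / 2 * ‖v‖ ^ 2 + √(p * q) * ⟪v, w⟫ + 1 / 2 * q * ‖w‖ ^ 2) := by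
  have hpq : √(p * e) * √(q * e) = √(p * q) * e := by
    rw [← Real.sqrt_mul (mul_nonneg hp he), show p * e * (q * e) = p * q * e ^ 2 by ring,
      Real.sqrt_mul (mul_nonneg hp hq), Real.sqrt_sq he]
  rw [norm_add_sq_real, norm_smul, norm_smul, real_inner_smul_left, real_inner_smul_right,
    Real.norm_of_nonneg (Real.sqrt_nonneg _), Real.norm_of_nonneg (Real.sqrt_nonneg _), mul_pow,
    mul_pow, Real.sq_sqrt (mul_nonneg hp he), Real.sq_sqrt (mul_nonneg hq he)]
  linear_combination ⟪v, w⟫ * hpq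

theorem HasDerivWithinAt.dampedLyapunov [CompleteSpace E] {f : E → ℝ} {x v a : ℝ → E}
    {γ e b : ℝ → ℝ} {γ' b' β t : ℝ} {s : Set ℝ} (xstar : E)
    (hf : DifferentiableAt ℝ f (x t)) (hx : HasDerivWithinAt x (v t) s t)
    (hv : HasDerivWithinAt v (a t) s t) (hode : a t + γ t • v t + gradient f (x t) = 0)
    (hγ : HasDerivWithinAt γ γ' s t) (he : HasDerivWithinAt e (β * γ t * e t) s t)
    (hb : HasDerivWithinAt b b' s t) (hbγ : b t = β * (1 - β) * γ t ^ 2 - β * γ') :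
    HasDerivWithinAt
      (fun u => e u * (1 / 2 * ‖v u‖ ^ 2 + β * γ u * ⟪v u, x u - xstar⟫
        + 1 / 2 * b u * ‖x u - xstar‖ ^ 2 + (f (x u) - f xstar)))
      (e t * (-((1 - 3 / 2 * β) * γ t * ‖v t‖ ^ 2)
        + 1 / 2 * (b' + β * γ t * b t) * ‖x t - xstar‖ ^ 2
        + β * γ t * (f (x t) - f xstar - ⟪gradient f (x t), x t - xstar⟫))) s t := by
  have hw : HasDerivWithinAt (fun u => x u - xstar) (v t) s t := hx.sub_const xstar
  have hfx : HasDerivWithinAt (fun u => f (x u)) ⟪gradient f (x t), v t⟫ s t := by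
    simpa [Function.comp_def] using hf.hasGradientAt.hasFDerivAt.comp_hasDerivWithinAt t hx
  have ha : a t = -(γ t • v t) - gradient f (x t) := by
    linear_combination (norm := module) hode
  refine (he.mul ((((hv.norm_sq.const_mul (1 / 2)).add ((hγ.const_mul β).mul (hv.inner ℝ hw))).add
    ((hb.const_mul (1 / 2)).mul hw.norm_sq)).add (hfx.sub_const (f xstar)))).congr_deriv ?_
  rw [real_inner_comm (a t), real_inner_comm (v t) (x t - xstar), ha]
  simp only [inner_sub_left, inner_neg_left, real_inner_smul_left, real_inner_self_eq_norm_sq,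
    Pi.add_apply, Pi.mul_apply]
  linear_combination e t * ⟪v t, x t - xstar⟫ * hbγ

end DampedSystem

theorem antitoneOn_of_forall_hasDerivWithinAt_nonpos {f : ℝ → ℝ} {D : Set ℝ} (hD : Convex ℝ D)
    (h : ∀ t ∈ D, ∃ f', HasDerivWithinAt f f' D t ∧ f' ≤ 0) : AntitoneOn f D := by
  choose! f' hf' hf'0 using h
  exact antitoneOn_of_hasDerivWithinAt_nonpos hD (fun t ht => (hf' t ht).continuousWithinAt)
    (fun t ht => (hf' t (interior_subset ht)).mono interior_subset)
    (fun t ht => hf'0 t (interior_subset ht))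

section PowerDamping

variable {r α β t : ℝ}

theorem Real.rpow_one_sub_mul_rpow_neg_sub_one (ht : 0 < t) :
    t ^ (1 - α) * t ^ (-α - 1) = (t ^ (-α)) ^ 2 := by
  rw [← Real.rpow_add ht, ← Real.rpow_mul_natCast ht.le]
  ring_nf

theorem Real.sqrt_rpow_one_sub_div_mul_rpow_neg_sub_one {c κ : ℝ} (hc : 0 ≤ c) (hκ : κ ≠ 0)
    (ht : 0 < t) : √(c * t ^ (1 - α) / κ * (c * κ * t ^ (-α - 1))) = c * t ^ (-α) := by
  rw [show c * t ^ (1 - α) / κ * (c * κ * t ^ (-α - 1)) = c ^ 2 * (t ^ (1 - α) * t ^ (-α - 1)) by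
      field_simp,
    Real.rpow_one_sub_mul_rpow_neg_sub_one ht, ← mul_pow,
    Real.sqrt_sq (mul_nonneg hc (Real.rpow_nonneg ht.le _))]

theorem hasDerivAt_exp_mul_rpow_one_sub (hα : α ≠ 1) (ht : t ≠ 0) :
    HasDerivAt (fun u => Real.exp (β * (r / (1 - α) * u ^ (1 - α))))
      (β * (r * t ^ (-α)) * Real.exp (β * (r / (1 - α) * t ^ (1 - α)))) t := by
  have h := (((Real.hasDerivAt_rpow_const (p := 1 - α) (Or.inl ht)).const_mul
    (r / (1 - α))).const_mul β).exp
  rw [sub_sub_cancel_left] at h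
  convert h using 1
  field_simp [sub_ne_zero.mpr hα.symm]

-- `B t ^ 2 = lyapunovWeight r α β t * D t`
noncomputable def lyapunovWeight (r α β t : ℝ) : ℝ :=
  β * r * ((1 - β) * r * t ^ (1 - α) + α) * t ^ (-α - 1)

theorem lyapunovWeight_eq (ht : 0 < t) :
    lyapunovWeight r α β t = β * (1 - β) * (r * t ^ (-α)) ^ 2 - β * (r * (-α * t ^ (-α - 1))) := by
  rw [lyapunovWeight]
  linear_combination β * (1 - β) * r ^ 2 * Real.rpow_one_sub_mul_rpow_neg_sub_one (α := α) ht

theorem exists_hasDerivAt_lyapunovWeight (ht : 0 < t) (μ : ℝ) :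
    ∃ b', HasDerivAt (lyapunovWeight r α β) b' t ∧
      b' + β * (r * t ^ (-α)) * lyapunovWeight r α β t = β * (r * t ^ (-α)) * μ
        - β * r * (μ * t ^ 2 - (1 - β) * β * r ^ 2 * t ^ (2 * (1 - α))
          + (2 - 3 * β) * r * α * t ^ (1 - α) + α * (α + 1)) * t ^ (-α - 2) := by
  have hpow (p : ℝ) := Real.hasDerivAt_rpow_const (p := p) (Or.inl ht.ne')
  refine ⟨_, ((((hpow (1 - α)).const_mul ((1 - β) * r)).add_const α).const_mul (β * r)).mul
    (hpow (-α - 1)), ?_⟩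
  have e1 : t ^ (1 - α) = t * t ^ (-α) := by
    rw [show 1 - α = -α + 1 by ring, Real.rpow_add_one ht.ne']; ring
  have e2 : t ^ (-α - 1) = t ^ (-α) / t := Real.rpow_sub_one ht.ne' _
  have e3 : t ^ (-α - 2) = t ^ (-α) / t ^ 2 := by
    rw [← Real.rpow_natCast, ← Real.rpow_sub ht]; ring_nf
  have e4 : t ^ (2 * (1 - α)) = (t * t ^ (-α)) ^ 2 := by
    rw [mul_comm, Real.rpow_mul ht.le, Real.rpow_two, e1]
  simp only [lyapunovWeight, sub_sub_cancel_left, show -α - 1 - 1 = -α - 2 by ring, e1, e2, e3, e4]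
  field_simp
  ring

end PowerDamping

theorem stmt13_general (d : ℕ) (f : EuclideanSpace ℝ (Fin d) → ℝ) (μ : ℝ)
    (hf : ContDiff ℝ 2 f)
    (hsc : ∀ z y : EuclideanSpace ℝ (Fin d),
      μ / 2 * ‖y - z‖ ^ 2 ≤ f y - f z - ⟪gradient f z, y - z⟫)
    (xstar : EuclideanSpace ℝ (Fin d))
    (r α β : ℝ) (hr : 0 < r) (hα0 : 0 ≤ α) (hα1 : α < 1) (hβ0 : 0 < β) (hβ : β ≤ 1 / 2)
    (T : ℝ) (hT : 0 < T)
    (hP : ∀ s ≥ T, 0 ≤ μ * s ^ 2 - (1 - β) * β * r ^ 2 * s ^ (2 * (1 - α))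
      + (2 - 3 * β) * r * α * s ^ (1 - α) + α * (α + 1))
    (x v a : ℝ → EuclideanSpace ℝ (Fin d))
    (hx : ∀ t ∈ Set.Ici T, HasDerivWithinAt x (v t) (Set.Ici T) t)
    (hv : ∀ t ∈ Set.Ici T, HasDerivWithinAt v (a t) (Set.Ici T) t)
    (hode : ∀ t ∈ Set.Ici T, a t + (r / t ^ α) • v t + gradient f (x t) = 0) :
    let ξ : ℝ → ℝ := fun t => r / (1 - α) * t ^ (1 - α)
    let D : ℝ → ℝ := fun t => Real.exp (β * ξ t)
    let B : ℝ → ℝ := fun t =>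
      Real.sqrt (β * r * ((1 - β) * r * t ^ (1 - α) + α) * t ^ (-α - 1) * Real.exp (β * ξ t))
    let A : ℝ → ℝ := fun t =>
      Real.sqrt (β * r * t ^ (1 - α) / ((1 - β) * r * t ^ (1 - α) + α) * Real.exp (β * ξ t))
    let C : ℝ → ℝ := fun t =>
      (1 - β * r * t ^ (1 - α) / ((1 - β) * r * t ^ (1 - α) + α)) * Real.exp (β * ξ t)
    let P : ℝ → ℝ := fun t => μ * t ^ 2 - (1 - β) * β * r ^ 2 * t ^ (2 * (1 - α))
      + (2 - 3 * β) * r * α * t ^ (1 - α) + α * (α + 1)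
    let L : ℝ → ℝ := fun t => 1 / 2 * ‖A t • v t + B t • (x t - xstar)‖ ^ 2
      + 1 / 2 * C t * ‖v t‖ ^ 2 + D t * (f (x t) - f xstar)
    (∀ t ∈ Set.Ici T, ∃ L' : ℝ,
      HasDerivWithinAt L L' (Set.Ici T) t ∧
      L' ≤ -(((1 - 3 / 2 * β) * r * t ^ (-α) * ‖v t‖ ^ 2
        + 1 / 2 * β * r * P t * t ^ (-α - 2) * ‖x t - xstar‖ ^ 2) * Real.exp (β * ξ t)) ∧
      -(((1 - 3 / 2 * β) * r * t ^ (-α) * ‖v t‖ ^ 2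
        + 1 / 2 * β * r * P t * t ^ (-α - 2) * ‖x t - xstar‖ ^ 2) * Real.exp (β * ξ t)) ≤ 0) ∧
    AntitoneOn L (Set.Ici T) := by
  intro ξ D B A C P L
  have hL : ∀ s ∈ Set.Ici T, L s = D s * (1 / 2 * ‖v s‖ ^ 2
      + β * (r * s ^ (-α)) * ⟪v s, x s - xstar⟫
      + 1 / 2 * lyapunovWeight r α β s * ‖x s - xstar‖ ^ 2 + (f (x s) - f xstar)) := by
    intro s hs
    have hs0 : 0 < s := hT.trans_le hs
    have hκ : 0 < (1 - β) * r * s ^ (1 - α) + α :=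
      add_pos_of_pos_of_nonneg (mul_pos (by nlinarith) (by positivity)) hα0
    simp only [L, A, B, C, D, ξ]
    rw [half_norm_sqrt_smul_add_sqrt_smul_sq (by positivity) (by positivity) (by positivity),
      Real.sqrt_rpow_one_sub_div_mul_rpow_neg_sub_one (by positivity) hκ.ne' hs0, lyapunovWeight]
    ring
  refine (fun h => ⟨h, antitoneOn_of_forall_hasDerivWithinAt_nonpos (convex_Ici T) fun t ht =>
    (h t ht).imp fun _ hL' => ⟨hL'.1, hL'.2.1.trans hL'.2.2⟩⟩) ?_
  intro t ht
  have ht0 : 0 < t := hT.trans_le ht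
  obtain ⟨b', hb', hPb'⟩ := exists_hasDerivAt_lyapunovWeight (r := r) (α := α) (β := β) ht0 μ
  have hode' : a t + (r * t ^ (-α)) • v t + gradient f (x t) = 0 := by
    rw [Real.rpow_neg ht0.le, ← div_eq_mul_inv]; exact hode t ht
  refine ⟨_, (HasDerivWithinAt.dampedLyapunov (γ := fun u => r * u ^ (-α)) (e := D) xstar
    ((hf.differentiable (by norm_num)) (x t)) (hx t ht) (hv t ht) hode'
    (((Real.hasDerivAt_rpow_const (Or.inl ht0.ne')).const_mul r).hasDerivWithinAt)
    (hasDerivAt_exp_mul_rpow_one_sub hα1.ne ht0.ne').hasDerivWithinAt hb'.hasDerivWithinAt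
    (lyapunovWeight_eq ht0)).congr hL (hL t ht), ?_, ?_⟩
  · have hS := sub_sub_inner_gradient_le_of_strongConvex hsc (x t) xstar
    have hDγ : 0 ≤ D t * (β * (r * t ^ (-α))) := by positivity
    linear_combination mul_le_mul_of_nonneg_left hS hDγ + D t * (1 / 2) * ‖x t - xstar‖ ^ 2 * hPb'
  · refine neg_nonpos.mpr (mul_nonneg (add_nonneg ?_ ?_) (Real.exp_pos _).le)
    · exact mul_nonneg (mul_nonneg (mul_nonneg (by linarith) hr.le) (by positivity)) (by positivity)
    · exact mul_nonneg (mul_nonneg (mul_nonneg (by positivity) (hP t ht)) (by positivity))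
        (by positivity)

/-- for a μ-strongly convex `f`, `0 ≤ α < 1`, `0 < β ≤ 1/2` (and
`r ≤ √(μ/(β(1−β)))` when `α = 0`), past any time `T` beyond which the polynomial
`P` is nonnegative, the Lyapunov function `L` has derivative bounded above by
`−[(1 − (3/2)β)r t^{−α}‖ẋ‖² + (1/2)βr P(t) t^{−α−2}‖x − x*‖²]e^{βξ(t)} ≤ 0`
along solutions of `ẍ + (r/t^α)ẋ + ∇f(x) = 0`; in particular `L` is nonincreasing. -/
theorem stmt13 (d : ℕ) (f : EuclideanSpace ℝ (Fin d) → ℝ) (μ : ℝ) (hμ : 0 < μ)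
    (hf : ContDiff ℝ 2 f)
    (hsc : ∀ z y : EuclideanSpace ℝ (Fin d),
      μ / 2 * ‖y - z‖ ^ 2 ≤ f y - f z - ⟪gradient f z, y - z⟫)
    (xstar : EuclideanSpace ℝ (Fin d)) (hmin : ∀ y, f xstar ≤ f y)
    (r α β : ℝ) (hr : 0 < r) (hα0 : 0 ≤ α) (hα1 : α < 1) (hβ0 : 0 < β) (hβ : β ≤ 1 / 2)
    (hα0r : α = 0 → r ≤ Real.sqrt (μ / (β * (1 - β))))
    (T : ℝ) (hT : 0 < T)
    (hP : ∀ s ≥ T, 0 ≤ μ * s ^ 2 - (1 - β) * β * r ^ 2 * s ^ (2 * (1 - α))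
      + (2 - 3 * β) * r * α * s ^ (1 - α) + α * (α + 1))
    (x v a : ℝ → EuclideanSpace ℝ (Fin d))
    (hx : ∀ t ∈ Set.Ici T, HasDerivWithinAt x (v t) (Set.Ici T) t)
    (hv : ∀ t ∈ Set.Ici T, HasDerivWithinAt v (a t) (Set.Ici T) t)
    (hode : ∀ t ∈ Set.Ici T, a t + (r / t ^ α) • v t + gradient f (x t) = 0) :
    let ξ : ℝ → ℝ := fun t => r / (1 - α) * t ^ (1 - α)
    let D : ℝ → ℝ := fun t => Real.exp (β * ξ t)
    let B : ℝ → ℝ := fun t =>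
      Real.sqrt (β * r * ((1 - β) * r * t ^ (1 - α) + α) * t ^ (-α - 1) * Real.exp (β * ξ t))
    let A : ℝ → ℝ := fun t =>
      Real.sqrt (β * r * t ^ (1 - α) / ((1 - β) * r * t ^ (1 - α) + α) * Real.exp (β * ξ t))
    let C : ℝ → ℝ := fun t =>
      (1 - β * r * t ^ (1 - α) / ((1 - β) * r * t ^ (1 - α) + α)) * Real.exp (β * ξ t)
    let P : ℝ → ℝ := fun t => μ * t ^ 2 - (1 - β) * β * r ^ 2 * t ^ (2 * (1 - α))
      + (2 - 3 * β) * r * α * t ^ (1 - α) + α * (α + 1)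
    let L : ℝ → ℝ := fun t => 1 / 2 * ‖A t • v t + B t • (x t - xstar)‖ ^ 2
      + 1 / 2 * C t * ‖v t‖ ^ 2 + D t * (f (x t) - f xstar)
    (∀ t ∈ Set.Ici T, ∃ L' : ℝ,
      HasDerivWithinAt L L' (Set.Ici T) t ∧
      L' ≤ -(((1 - 3 / 2 * β) * r * t ^ (-α) * ‖v t‖ ^ 2
        + 1 / 2 * β * r * P t * t ^ (-α - 2) * ‖x t - xstar‖ ^ 2) * Real.exp (β * ξ t)) ∧
      -(((1 - 3 / 2 * β) * r * t ^ (-α) * ‖v t‖ ^ 2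
        + 1 / 2 * β * r * P t * t ^ (-α - 2) * ‖x t - xstar‖ ^ 2) * Real.exp (β * ξ t)) ≤ 0) ∧
    AntitoneOn L (Set.Ici T) :=
  stmt13_general d f μ hf hsc xstar r α β hr hα0 hα1 hβ0 hβ T hT hP x v a hx hv hode
end

section
/- Let f : ℝ^d → ℝ be twice continuously differentiable and μ-strongly convex (μ > 0) with minimizer x* and f* = f(x*), and suppose ∇f is globally Lipschitz. Let x : [0, ∞) → ℝ^d be twice differentiable with x(0) = x₀, ẋ(0) = 0, satisfying ẍ(t) + 2√μ·ẋ(t) + ∇f(x(t)) = 0 for all t ≥ 0. Then for all t ≥ 0: f(x(t)) − f* ≤ [(μ/2)·‖x₀ − x*‖² + f(x₀) − f*]·e^{−√μ·t}. -/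
open RealInnerProductSpace Set

/-!
Lyapunov argument. Along a trajectory, `E = f x - f x* + ‖ẋ + √μ (x - x*)‖² / 2` satisfies
`Ė + √μ E = -(√μ/2) ‖ẋ‖² + √μ (f x - f x* + (μ/2) ‖x - x*‖² - ⟪∇f x, x - x*⟫) ≤ 0`
by the equation of motion and strong convexity between `x` and `x*`. Grönwall's inequality gives
`E t ≤ E 0 · e^{-√μ t}`; finally `f x - f x* ≤ E`, and `E 0` is the bracket since `ẋ 0 = 0`.
-/

theorem le_mul_exp_of_hasDerivWithinAt_le_mul {g g' : ℝ → ℝ} {K a : ℝ}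
    (hg : ∀ t ∈ Ici a, HasDerivWithinAt g (g' t) (Ici a) t)
    (hbound : ∀ t ∈ Ici a, g' t ≤ K * g t) :
    ∀ t ∈ Ici a, g t ≤ g a * Real.exp (K * (t - a)) := by
  intro t ht
  rw [← gronwallBound_ε0]
  refine le_gronwallBound_of_liminf_deriv_right_le
    (fun τ hτ => (hg τ hτ.1).continuousWithinAt.mono Icc_subset_Ici_self)
    (fun τ hτ _ hr => ((hg τ hτ.1).mono (Ici_subset_Ici.2 hτ.1)).liminf_right_slope_le hr) le_rfl
    (fun τ hτ => by simpa using hbound τ hτ.1) t ⟨ht, le_rfl⟩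

section DampedEnergy

variable {E : Type*} [NormedAddCommGroup E] [InnerProductSpace ℝ E]

noncomputable def dampedEnergy (f : E → ℝ) (xstar : E) (s : ℝ) (x v : E) : ℝ :=
  f x - f xstar + ‖v + s • (x - xstar)‖ ^ 2 / 2

theorem sub_le_dampedEnergy (f : E → ℝ) (xstar : E) (s : ℝ) (x v : E) :
    f x - f xstar ≤ dampedEnergy f xstar s x v := by
  unfold dampedEnergy; linarith [sq_nonneg ‖v + s • (x - xstar)‖]

theorem dampedEnergy_zero_right (f : E → ℝ) (xstar : E) (s : ℝ) (x : E) :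
    dampedEnergy f xstar s x 0 = s ^ 2 / 2 * ‖x - xstar‖ ^ 2 + (f x - f xstar) := by
  rw [dampedEnergy, zero_add, norm_smul, mul_pow, Real.norm_eq_abs, sq_abs]; ring

theorem hasDerivWithinAt_dampedEnergy [CompleteSpace E] {f : E → ℝ} (hf : Differentiable ℝ f)
    (xstar : E) (s : ℝ) {x v : ℝ → E} {v' a : E} {S : Set ℝ} {t : ℝ}
    (hx : HasDerivWithinAt x v' S t) (hv : HasDerivWithinAt v a S t) :
    HasDerivWithinAt (fun τ => dampedEnergy f xstar s (x τ) (v τ))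
      (⟪gradient f (x t), v'⟫ + ⟪v t + s • (x t - xstar), a + s • v'⟫) S t := by
  have hfx : HasDerivWithinAt (fun τ => f (x τ)) ⟪gradient f (x t), v'⟫ S t := by
    rw [inner_gradient_left]
    exact (hf (x t)).hasFDerivAt.comp_hasDerivWithinAt t hx
  have hw : HasDerivWithinAt (fun τ => v τ + s • (x τ - xstar)) (a + s • v') S t :=
    hv.add ((hx.sub_const xstar).const_smul s)
  exact ((hfx.sub_const (f xstar)).add (hw.norm_sq.div_const 2)).congr_deriv (by ring)

theorem inner_add_inner_le_neg_mul_dampedEnergy [CompleteSpace E] {f : E → ℝ} {xstar x v a : E}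
    {s : ℝ} (hs : 0 ≤ s)
    (hconv : f x - f xstar + s ^ 2 / 2 * ‖x - xstar‖ ^ 2 ≤ ⟪gradient f x, x - xstar⟫)
    (hode : a + (2 * s) • v + gradient f x = 0) :
    ⟪gradient f x, v⟫ + ⟪v + s • (x - xstar), a + s • v⟫ ≤ -s * dampedEnergy f xstar s x v := by
  have ha : a + s • v = -(s • v) - gradient f x := by
    rw [← sub_eq_zero, ← hode, two_mul, add_smul]; abel
  have hsum : ⟪gradient f x, v⟫ + ⟪v + s • (x - xstar), a + s • v⟫ + s * dampedEnergy f xstar s x v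
      = -(s / 2) * ‖v‖ ^ 2 +
        s * (f x - f xstar + s ^ 2 / 2 * ‖x - xstar‖ ^ 2 - ⟪gradient f x, x - xstar⟫) := by
    rw [ha, dampedEnergy]
    simp only [← real_inner_self_eq_norm_sq, inner_add_left, inner_add_right, inner_sub_left,
      inner_sub_right, inner_neg_right, real_inner_smul_left, real_inner_smul_right,
      real_inner_comm v (x - xstar), real_inner_comm (gradient f x)]
    ring
  linarith [mul_nonneg hs (sq_nonneg ‖v‖), mul_nonneg hs (sub_nonneg.2 hconv)]

end DampedEnergy

theorem stmt15_general (d : ℕ) (f : EuclideanSpace ℝ (Fin d) → ℝ) (μ : ℝ) (hμ : 0 < μ)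
    (hf : ContDiff ℝ 2 f)
    (hsc : ∀ z y : EuclideanSpace ℝ (Fin d),
      μ / 2 * ‖y - z‖ ^ 2 ≤ f y - f z - ⟪gradient f z, y - z⟫)
    (xstar : EuclideanSpace ℝ (Fin d))
    (x₀ : EuclideanSpace ℝ (Fin d))
    (x v a : ℝ → EuclideanSpace ℝ (Fin d))
    (hx : ∀ t ∈ Set.Ici (0 : ℝ), HasDerivWithinAt x (v t) (Set.Ici (0 : ℝ)) t)
    (hv : ∀ t ∈ Set.Ici (0 : ℝ), HasDerivWithinAt v (a t) (Set.Ici (0 : ℝ)) t)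
    (hode : ∀ t ∈ Set.Ici (0 : ℝ),
      a t + (2 * Real.sqrt μ) • v t + gradient f (x t) = 0)
    (hx0 : x 0 = x₀) (hv0 : v 0 = 0) :
    ∀ t ≥ (0 : ℝ), f (x t) - f xstar ≤
      (μ / 2 * ‖x₀ - xstar‖ ^ 2 + (f x₀ - f xstar)) * Real.exp (-(Real.sqrt μ) * t) := by
  have hs2 : Real.sqrt μ ^ 2 = μ := Real.sq_sqrt hμ.le
  have hconv : ∀ y, f y - f xstar + Real.sqrt μ ^ 2 / 2 * ‖y - xstar‖ ^ 2 ≤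
      ⟪gradient f y, y - xstar⟫ := by
    intro y
    have h := hsc y xstar
    rw [← neg_sub y xstar, inner_neg_right, norm_neg] at h
    rw [hs2]
    linarith
  have hdecay := le_mul_exp_of_hasDerivWithinAt_le_mul
    (fun t ht => hasDerivWithinAt_dampedEnergy (hf.differentiable two_ne_zero) xstar
      (Real.sqrt μ) (hx t ht) (hv t ht))
    (fun t ht => inner_add_inner_le_neg_mul_dampedEnergy (Real.sqrt_nonneg μ) (hconv (x t))
      (hode t ht))
  intro t ht
  calc f (x t) - f xstar ≤ dampedEnergy f xstar (Real.sqrt μ) (x t) (v t) :=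
        sub_le_dampedEnergy _ _ _ _ _
    _ ≤ _ := hdecay t ht
    _ = _ := by rw [hx0, hv0, dampedEnergy_zero_right, hs2, sub_zero]

/-- linear convergence of the (0, 2√μ)-damped system
`ẍ + 2√μ·ẋ + ∇f(x) = 0` for μ-strongly convex `f`:
`f(x(t)) − f* ≤ [(μ/2)‖x₀ − x*‖² + f(x₀) − f*]·e^{−√μ·t}`. -/
theorem stmt15 (d : ℕ) (f : EuclideanSpace ℝ (Fin d) → ℝ) (μ : ℝ) (hμ : 0 < μ)
    (hf : ContDiff ℝ 2 f)
    (hsc : ∀ z y : EuclideanSpace ℝ (Fin d),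
      μ / 2 * ‖y - z‖ ^ 2 ≤ f y - f z - ⟪gradient f z, y - z⟫)
    (xstar : EuclideanSpace ℝ (Fin d)) (hmin : ∀ y, f xstar ≤ f y)
    (Lip : ℝ) (hLip : 0 < Lip)
    (hgrad : ∀ u v : EuclideanSpace ℝ (Fin d),
      ‖gradient f u - gradient f v‖ ≤ Lip * ‖u - v‖)
    (x₀ : EuclideanSpace ℝ (Fin d))
    (x v a : ℝ → EuclideanSpace ℝ (Fin d))
    (hx : ∀ t ∈ Set.Ici (0 : ℝ), HasDerivWithinAt x (v t) (Set.Ici (0 : ℝ)) t)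
    (hv : ∀ t ∈ Set.Ici (0 : ℝ), HasDerivWithinAt v (a t) (Set.Ici (0 : ℝ)) t)
    (hode : ∀ t ∈ Set.Ici (0 : ℝ),
      a t + (2 * Real.sqrt μ) • v t + gradient f (x t) = 0)
    (hx0 : x 0 = x₀) (hv0 : v 0 = 0) :
    ∀ t ≥ (0 : ℝ), f (x t) - f xstar ≤
      (μ / 2 * ‖x₀ - xstar‖ ^ 2 + (f x₀ - f xstar)) * Real.exp (-(Real.sqrt μ) * t) :=
  stmt15_general d f μ hμ hf hsc xstar x₀ x v a hx hv hode hx0 hv0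
end

section
/- Let f : ℝ^d → ℝ be twice continuously differentiable and μ-strongly convex (μ > 0) with minimizer x* and f* = f(x*). Let r > 0 and 0 < α < 1. Define for t > 0: ξ(t) = (r/(1−α))·t^{1−α}, D(t) = e^{ξ(t)/2}, B(t) = √((r/2)·[(r/2)·t^{1−α} + α]·t^{−α−1}·e^{ξ(t)/2}), A(t) = √(((r/2)·t^{1−α}/((r/2)·t^{1−α} + α))·e^{ξ(t)/2}), C(t) = [1 − (r/2)·t^{1−α}/((r/2)·t^{1−α} + α)]·e^{ξ(t)/2}, L(t) = (1/2)‖A(t)ẋ(t) + B(t)(x(t) − x*)‖² + (1/2)C(t)‖ẋ(t)‖² + D(t)(f(x(t)) − f*), and P(t) = μt² − (r²/4)·t^{2(1−α)} + (r·α/2)·t^{1−α} + α(α+1). Let T > 0 be such that P(s) ≥ 0 for all s ≥ T, and let x be a twice differentiable solution of ẍ(t) + (r/t^α)·ẋ(t) + ∇f(x(t)) = 0 on [T, ∞). Then for all t ≥ T: f(x(t)) − f* ≤ L(T)·e^{−(r/(2(1−α)))·t^{1−α}}. -/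
/-!
The Lyapunov function factors as `L t = exp (ξ t / 2) * E t`, where `E` (`dampedEnergy`) is a
quadratic form in `ẋ` and `x - x*` plus `f x - f*`. Along the flow, with `p = t ^ (-α)`,
`(r/2) p E + E' = -(r/4) p ‖ẋ‖² + (r/2) p (f x - f* - ⟪∇f x, x - x*⟫ + (μ/2) ‖x - x*‖²)
  - (r/4) (p / t²) ‖x - x*‖² P(t)`,
and all three terms are nonpositive by strong convexity and `P ≥ 0`. Since `(ξ / 2)' = (r/2) p`,
`L` is nonincreasing on `[T, ∞)`, and `C ≥ 0` gives `exp (ξ t / 2) (f (x t) - f*) ≤ L t ≤ L T`.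
-/

open RealInnerProductSpace

namespace DampedGradientFlow

theorem rpow_one_sub_eq_mul_rpow_neg {t : ℝ} (ht : t ≠ 0) (α : ℝ) :
    t ^ (1 - α) = t * t ^ (-α) := by
  rw [sub_eq_neg_add, Real.rpow_add_one ht, mul_comm]

theorem hasDerivAt_exp_half_rpow {r α t : ℝ} (hα : α ≠ 1) (ht : 0 < t) :
    HasDerivAt (fun s : ℝ ↦ Real.exp (r / (1 - α) * s ^ (1 - α) / 2))
      (r / 2 * t ^ (-α) * Real.exp (r / (1 - α) * t ^ (1 - α) / 2)) t := by
  have hpow := Real.hasDerivAt_rpow_const (p := 1 - α) (Or.inl ht.ne')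
  refine (((hpow.const_mul (r / (1 - α))).div_const 2).exp).congr_deriv ?_
  rw [sub_sub_cancel_left]
  field_simp [sub_ne_zero.2 hα.symm]

variable {H : Type*} [NormedAddCommGroup H] [InnerProductSpace ℝ H]

noncomputable def dampedEnergy (r α : ℝ) (f : H → ℝ) (xstar : H) (t : ℝ) (y w : H) : ℝ :=
  1 / 2 * ‖w‖ ^ 2 + r / 2 * t ^ (-α) * ⟪w, y - xstar⟫
    + (r ^ 2 / 8 * (t ^ (-α)) ^ 2 + r * α / 4 * (t ^ (-α) / t)) * ‖y - xstar‖ ^ 2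
    + (f y - f xstar)

theorem lyapunov_eq_mul_dampedEnergy {f : H → ℝ} {xstar y w : H} {r α t c : ℝ} (hr : 0 < r)
    (hα : 0 < α) (ht : 0 < t) (hc : 0 ≤ c) :
    1 / 2 * ‖√(r / 2 * t ^ (1 - α) / (r / 2 * t ^ (1 - α) + α) * c) • w
        + √(r / 2 * (r / 2 * t ^ (1 - α) + α) * t ^ (-α - 1) * c) • (y - xstar)‖ ^ 2
      + 1 / 2 * ((1 - r / 2 * t ^ (1 - α) / (r / 2 * t ^ (1 - α) + α)) * c) * ‖w‖ ^ 2
      + c * (f y - f xstar)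
    = c * dampedEnergy r α f xstar t y w := by
  have hp : 0 < t ^ (-α) := Real.rpow_pos_of_pos ht _
  rw [Real.rpow_sub_one ht.ne', rpow_one_sub_eq_mul_rpow_neg ht.ne']
  have hA := Real.sq_sqrt (x := r / 2 * (t * t ^ (-α)) / (r / 2 * (t * t ^ (-α)) + α) * c)
    (by positivity)
  have hB := Real.sq_sqrt (x := r / 2 * (r / 2 * (t * t ^ (-α)) + α) * (t ^ (-α) / t) * c)
    (by positivity)
  have hAB : √(r / 2 * (t * t ^ (-α)) / (r / 2 * (t * t ^ (-α)) + α) * c)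
      * √(r / 2 * (r / 2 * (t * t ^ (-α)) + α) * (t ^ (-α) / t) * c) = r / 2 * t ^ (-α) * c := by
    rw [← Real.sqrt_mul (by positivity), ← Real.sqrt_sq (by positivity : 0 ≤ r / 2 * t ^ (-α) * c)]
    congr 1
    field_simp
  rw [norm_add_sq_real, norm_smul, norm_smul, real_inner_smul_left, real_inner_smul_right,
    Real.norm_of_nonneg (Real.sqrt_nonneg _), Real.norm_of_nonneg (Real.sqrt_nonneg _), mul_pow,
    mul_pow, hA, hB, dampedEnergy]
  linear_combination (norm := skip) ⟪w, y - xstar⟫ * hAB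
  field_simp
  ring

variable [CompleteSpace H]

noncomputable def dampedEnergyRate (r α : ℝ) (f : H → ℝ) (xstar : H) (t : ℝ) (y w : H) : ℝ :=
  -(r / 2 * t ^ (-α)) * ‖w‖ ^ 2 - r ^ 2 / 4 * (t ^ (-α)) ^ 2 * ⟪w, y - xstar⟫
    - r / 2 * t ^ (-α) * ⟪gradient f y, y - xstar⟫
    - (r ^ 2 * α / 4 * (t ^ (-α)) ^ 2 / t + r * α * (α + 1) / 4 * t ^ (-α) / t ^ 2)
      * ‖y - xstar‖ ^ 2

theorem hasDerivWithinAt_dampedEnergy {f : H → ℝ} {xstar : H} {r α : ℝ} {x v a : ℝ → H}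
    {S : Set ℝ} {t : ℝ} (ht : 0 < t) (hf : DifferentiableAt ℝ f (x t))
    (hx : HasDerivWithinAt x (v t) S t) (hv : HasDerivWithinAt v (a t) S t)
    (hode : a t + (r / t ^ α) • v t + gradient f (x t) = 0) :
    HasDerivWithinAt (fun s ↦ dampedEnergy r α f xstar s (x s) (v s))
      (dampedEnergyRate r α f xstar t (x t) (v t)) S t := by
  have hp : HasDerivWithinAt (fun s : ℝ ↦ s ^ (-α)) (-α * (t ^ (-α) / t)) S t := by
    simpa [Real.rpow_sub_one ht.ne'] using
      (Real.hasDerivAt_rpow_const (p := -α) (Or.inl ht.ne')).hasDerivWithinAt (s := S)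
  have hq := hp.div (hasDerivWithinAt_id t S) ht.ne'
  have hu : HasDerivWithinAt (fun s ↦ x s - xstar) (v t) S t := hx.sub_const xstar
  have hfx : HasDerivWithinAt (fun s ↦ f (x s)) ⟪gradient f (x t), v t⟫ S t :=
    (hf.hasGradientAt.hasFDerivAt.comp_hasDerivWithinAt t hx).congr_deriv
      (InnerProductSpace.toDual_apply_apply ..)
  have htot := ((((hv.norm_sq.const_mul (1 / 2 : ℝ)).add
    ((hp.const_mul (r / 2)).mul (hv.inner ℝ hu))).add
    ((((hp.pow 2).const_mul (r ^ 2 / 8)).add (hq.const_mul (r * α / 4))).mul hu.norm_sq)).add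
    (hfx.sub_const (f xstar)))
  refine htot.congr_deriv ?_
  have ha : a t = -((r * t ^ (-α)) • v t) - gradient f (x t) := by
    rw [Real.rpow_neg ht.le, ← div_eq_mul_inv, ← sub_eq_zero, ← hode]
    abel
  rw [ha, dampedEnergyRate]
  generalize x t - xstar = u
  simp only [Pi.add_apply, Pi.pow_apply, Pi.div_apply, id, inner_sub_left, inner_sub_right,
    inner_neg_left, inner_neg_right, real_inner_smul_left, real_inner_smul_right,
    real_inner_self_eq_norm_sq, real_inner_comm (v t) (gradient f (x t)), real_inner_comm u (v t)]
  field_simp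
  ring

theorem dampedEnergyRate_le {f : H → ℝ} {xstar y w : H} {μ r α t : ℝ} (hr : 0 < r)
    (ht : 0 < t) (hsc : μ / 2 * ‖xstar - y‖ ^ 2 ≤ f xstar - f y - ⟪gradient f y, xstar - y⟫)
    (hP : 0 ≤ μ * t ^ 2 - r ^ 2 / 4 * t ^ (2 * (1 - α)) + r * α / 2 * t ^ (1 - α)
      + α * (α + 1)) :
    dampedEnergyRate r α f xstar t y w
      ≤ -(r / 2 * t ^ (-α) * dampedEnergy r α f xstar t y w) := by
  have hp : 0 < t ^ (-α) := Real.rpow_pos_of_pos ht _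
  have hP' : 0 ≤ μ * t ^ 2 - r ^ 2 / 4 * (t * t ^ (-α)) ^ 2 + r * α / 2 * (t * t ^ (-α))
      + α * (α + 1) := by
    rwa [mul_comm 2, Real.rpow_mul ht.le, Real.rpow_two, rpow_one_sub_eq_mul_rpow_neg ht.ne'] at hP
  have hsc' : f y - f xstar - ⟪gradient f y, y - xstar⟫ + μ / 2 * ‖y - xstar‖ ^ 2 ≤ 0 := by
    rw [← neg_sub y xstar, inner_neg_right, norm_neg] at hsc
    linarith
  have key : r / 2 * t ^ (-α) * dampedEnergy r α f xstar t y w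
      + dampedEnergyRate r α f xstar t y w
      = -(r / 4 * t ^ (-α) * ‖w‖ ^ 2)
        + r / 2 * t ^ (-α) * (f y - f xstar - ⟪gradient f y, y - xstar⟫
          + μ / 2 * ‖y - xstar‖ ^ 2)
        - r / 4 * (t ^ (-α) / t ^ 2) * ‖y - xstar‖ ^ 2 * (μ * t ^ 2
          - r ^ 2 / 4 * (t * t ^ (-α)) ^ 2 + r * α / 2 * (t * t ^ (-α)) + α * (α + 1)) := by
    rw [dampedEnergy, dampedEnergyRate]
    field_simp
    ring
  have hkinetic : 0 ≤ r / 4 * t ^ (-α) * ‖w‖ ^ 2 := by positivity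
  have hconvex := mul_nonpos_of_nonneg_of_nonpos (by positivity : 0 ≤ r / 2 * t ^ (-α)) hsc'
  have hpoly := mul_nonneg (by positivity : 0 ≤ r / 4 * (t ^ (-α) / t ^ 2) * ‖y - xstar‖ ^ 2) hP'
  linarith

theorem antitoneOn_exp_mul_dampedEnergy {f : H → ℝ} {xstar : H} {μ r α T : ℝ} {x v a : ℝ → H}
    (hf : Differentiable ℝ f)
    (hsc : ∀ z y, μ / 2 * ‖y - z‖ ^ 2 ≤ f y - f z - ⟪gradient f z, y - z⟫)
    (hr : 0 < r) (hα : α ≠ 1) (hT : 0 < T)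
    (hP : ∀ s ≥ T, 0 ≤ μ * s ^ 2 - r ^ 2 / 4 * s ^ (2 * (1 - α))
      + r * α / 2 * s ^ (1 - α) + α * (α + 1))
    (hx : ∀ t ∈ Set.Ici T, HasDerivWithinAt x (v t) (Set.Ici T) t)
    (hv : ∀ t ∈ Set.Ici T, HasDerivWithinAt v (a t) (Set.Ici T) t)
    (hode : ∀ t ∈ Set.Ici T, a t + (r / t ^ α) • v t + gradient f (x t) = 0) :
    AntitoneOn (fun t ↦ Real.exp (r / (1 - α) * t ^ (1 - α) / 2)
      * dampedEnergy r α f xstar t (x t) (v t)) (Set.Ici T) := by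
  have hderiv : ∀ t ∈ Set.Ici T, HasDerivWithinAt
      (fun t ↦ Real.exp (r / (1 - α) * t ^ (1 - α) / 2) * dampedEnergy r α f xstar t (x t) (v t))
      (Real.exp (r / (1 - α) * t ^ (1 - α) / 2) * (r / 2 * t ^ (-α)
        * dampedEnergy r α f xstar t (x t) (v t) + dampedEnergyRate r α f xstar t (x t) (v t)))
      (Set.Ici T) t := fun t ht ↦
    have ht0 : 0 < t := hT.trans_le ht
    ((hasDerivAt_exp_half_rpow hα ht0).hasDerivWithinAt.mul
      (hasDerivWithinAt_dampedEnergy ht0 (hf _) (hx t ht) (hv t ht) (hode t ht))).congr_deriv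
      (by ring)
  refine antitoneOn_of_hasDerivWithinAt_nonpos (convex_Ici T)
    (fun t ht ↦ (hderiv t ht).continuousWithinAt)
    (fun t ht ↦ (hderiv t (interior_subset ht)).mono interior_subset) fun t ht ↦ ?_
  have ht : T ≤ t := interior_subset (s := Set.Ici T) ht
  have hrate := dampedEnergyRate_le (w := v t) hr (hT.trans_le ht) (hsc (x t) xstar) (hP t ht)
  exact mul_nonpos_of_nonneg_of_nonpos (Real.exp_pos _).le (by linarith)

end DampedGradientFlow

open DampedGradientFlow

theorem stmt16_general (d : ℕ) (f : EuclideanSpace ℝ (Fin d) → ℝ) (μ : ℝ)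
    (hf : ContDiff ℝ 2 f)
    (hsc : ∀ z y : EuclideanSpace ℝ (Fin d),
      μ / 2 * ‖y - z‖ ^ 2 ≤ f y - f z - ⟪gradient f z, y - z⟫)
    (xstar : EuclideanSpace ℝ (Fin d))
    (r α : ℝ) (hr : 0 < r) (hα0 : 0 < α) (hα1 : α < 1)
    (T : ℝ) (hT : 0 < T)
    (hP : ∀ s ≥ T, 0 ≤ μ * s ^ 2 - r ^ 2 / 4 * s ^ (2 * (1 - α))
      + r * α / 2 * s ^ (1 - α) + α * (α + 1))
    (x v a : ℝ → EuclideanSpace ℝ (Fin d))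
    (hx : ∀ t ∈ Set.Ici T, HasDerivWithinAt x (v t) (Set.Ici T) t)
    (hv : ∀ t ∈ Set.Ici T, HasDerivWithinAt v (a t) (Set.Ici T) t)
    (hode : ∀ t ∈ Set.Ici T, a t + (r / t ^ α) • v t + gradient f (x t) = 0) :
    let ξ : ℝ → ℝ := fun t => r / (1 - α) * t ^ (1 - α)
    let D : ℝ → ℝ := fun t => Real.exp (ξ t / 2)
    let B : ℝ → ℝ := fun t =>
      Real.sqrt (r / 2 * (r / 2 * t ^ (1 - α) + α) * t ^ (-α - 1) * Real.exp (ξ t / 2))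
    let A : ℝ → ℝ := fun t =>
      Real.sqrt (r / 2 * t ^ (1 - α) / (r / 2 * t ^ (1 - α) + α) * Real.exp (ξ t / 2))
    let C : ℝ → ℝ := fun t =>
      (1 - r / 2 * t ^ (1 - α) / (r / 2 * t ^ (1 - α) + α)) * Real.exp (ξ t / 2)
    let L : ℝ → ℝ := fun t => 1 / 2 * ‖A t • v t + B t • (x t - xstar)‖ ^ 2
      + 1 / 2 * C t * ‖v t‖ ^ 2 + D t * (f (x t) - f xstar)
    ∀ t ≥ T, f (x t) - f xstar ≤
      L T * Real.exp (-(r / (2 * (1 - α))) * t ^ (1 - α)) := by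
  intro ξ D B A C L t ht
  have ht0 : 0 < t := hT.trans_le ht
  have hL : ∀ s ≥ T, L s = D s * dampedEnergy r α f xstar s (x s) (v s) := fun s hs ↦
    lyapunov_eq_mul_dampedEnergy hr hα0 (hT.trans_le hs) (Real.exp_pos _).le
  have hdecay : L t ≤ L T := by
    rw [hL t ht, hL T le_rfl]
    exact antitoneOn_exp_mul_dampedEnergy (hf.differentiable (by norm_num)) hsc hr hα1.ne hT hP
      hx hv hode Set.self_mem_Ici ht ht
  have hC : 0 ≤ C t := mul_nonneg (sub_nonneg.2 (div_le_one_of_le₀ (by linarith) (by positivity)))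
    (Real.exp_pos _).le
  have hlow : D t * (f (x t) - f xstar) ≤ L t :=
    le_add_of_nonneg_left (add_nonneg (by positivity) (by positivity))
  have hexp : Real.exp (-(r / (2 * (1 - α))) * t ^ (1 - α)) = (D t)⁻¹ := by
    rw [← Real.exp_neg]
    congr 1
    simp only [ξ]
    field_simp
  rw [hexp, ← div_eq_mul_inv, le_div_iff₀ (Real.exp_pos _)]
  linarith

/-- for μ-strongly convex `f` and `0 < α < 1`, along any solution of
`ẍ + (r/t^α)ẋ + ∇f(x) = 0` on `[T, ∞)` (with `P ≥ 0` on `[T, ∞)`), one has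
`f(x(t)) − f* ≤ L(T)·e^{−(r/(2(1−α)))·t^{1−α}}`, where `L` is the Lyapunov function
with `β = 1/2`. -/
theorem stmt16 (d : ℕ) (f : EuclideanSpace ℝ (Fin d) → ℝ) (μ : ℝ) (hμ : 0 < μ)
    (hf : ContDiff ℝ 2 f)
    (hsc : ∀ z y : EuclideanSpace ℝ (Fin d),
      μ / 2 * ‖y - z‖ ^ 2 ≤ f y - f z - ⟪gradient f z, y - z⟫)
    (xstar : EuclideanSpace ℝ (Fin d)) (hmin : ∀ y, f xstar ≤ f y)
    (r α : ℝ) (hr : 0 < r) (hα0 : 0 < α) (hα1 : α < 1)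
    (T : ℝ) (hT : 0 < T)
    (hP : ∀ s ≥ T, 0 ≤ μ * s ^ 2 - r ^ 2 / 4 * s ^ (2 * (1 - α))
      + r * α / 2 * s ^ (1 - α) + α * (α + 1))
    (x v a : ℝ → EuclideanSpace ℝ (Fin d))
    (hx : ∀ t ∈ Set.Ici T, HasDerivWithinAt x (v t) (Set.Ici T) t)
    (hv : ∀ t ∈ Set.Ici T, HasDerivWithinAt v (a t) (Set.Ici T) t)
    (hode : ∀ t ∈ Set.Ici T, a t + (r / t ^ α) • v t + gradient f (x t) = 0) :
    let ξ : ℝ → ℝ := fun t => r / (1 - α) * t ^ (1 - α)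
    let D : ℝ → ℝ := fun t => Real.exp (ξ t / 2)
    let B : ℝ → ℝ := fun t =>
      Real.sqrt (r / 2 * (r / 2 * t ^ (1 - α) + α) * t ^ (-α - 1) * Real.exp (ξ t / 2))
    let A : ℝ → ℝ := fun t =>
      Real.sqrt (r / 2 * t ^ (1 - α) / (r / 2 * t ^ (1 - α) + α) * Real.exp (ξ t / 2))
    let C : ℝ → ℝ := fun t =>
      (1 - r / 2 * t ^ (1 - α) / (r / 2 * t ^ (1 - α) + α)) * Real.exp (ξ t / 2)
    let L : ℝ → ℝ := fun t => 1 / 2 * ‖A t • v t + B t • (x t - xstar)‖ ^ 2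
      + 1 / 2 * C t * ‖v t‖ ^ 2 + D t * (f (x t) - f xstar)
    ∀ t ≥ T, f (x t) - f xstar ≤
      L T * Real.exp (-(r / (2 * (1 - α))) * t ^ (1 - α)) :=
  stmt16_general d f μ hf hsc xstar r α hr hα0 hα1 T hT hP x v a hx hv hode
end

section
/- Let f : ℝ^d → ℝ be twice continuously differentiable and μ-strongly convex (μ > 0) with minimizer x* and f* = f(x*). Let r > 3, set β = (1+r)/(2r) and T = √((r−3)(r+1)/(4μ)), and define for t > 0: D(t) = t^{(1+r)/2}, B(t) = √(βr·[(1−β)r + 1]·t^{βr−2}), A(t) = √((βr/((1−β)r + 1))·t^{βr}), C(t) = [1 − βr/((1−β)r + 1)]·t^{βr}, and L(t) = (1/2)‖A(t)ẋ(t) + B(t)(x(t) − x*)‖² + (1/2)C(t)‖ẋ(t)‖² + D(t)(f(x(t)) − f*). Then for every twice differentiable solution x of ẍ(t) + (r/t)·ẋ(t) + ∇f(x(t)) = 0 on [T, ∞) and all t ≥ T: f(x(t)) − f* ≤ L(T)·t^{−(1+r)/2}. -/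
/-!
Along the ODE the energy
`E(t) = ½‖t^{p/2} ẋ + p t^{p/2-1} (x - x*)‖² + t^p (f(x) - f*)` with `p = (1 + r)/2` has derivative
`(1 - p/2) t^{p-1}‖ẋ‖² + p²(p/2 - 1) t^{p-3}‖x - x*‖² + p t^{p-1} (f(x) - f* - ⟪∇f(x), x - x*⟫)`;
the choice of `p` is exactly the one that cancels the cross term `⟪ẋ, x - x*⟫`. Strong convexity
bounds the last bracket by `-μ/2 ‖x - x*‖²`, so the derivative is nonpositive as soon as
`p (p - 2) ≤ μ t²`, i.e. for `t ≥ T`. Hence `t^p (f(x(t)) - f*) ≤ E(t) ≤ E(T)`, and for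
`β = (1 + r)/(2r)` the function `L` of the statement is `E` (`βr = (1 - β)r + 1 = p`, so `C = 0`).
-/

open RealInnerProductSpace

section

variable {E : Type*} [NormedAddCommGroup E] [InnerProductSpace ℝ E] [CompleteSpace E]
  {f : E → ℝ} {xstar : E} {x v a : ℝ → E} {p r μ s T : ℝ} {S : Set ℝ}

noncomputable def lyapunovEnergy (f : E → ℝ) (xstar : E) (p : ℝ) (x v : ℝ → E) (t : ℝ) : ℝ :=
  1 / 2 * ‖t ^ (p / 2) • v t + (p * t ^ (p / 2 - 1)) • (x t - xstar)‖ ^ 2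
    + t ^ p * (f (x t) - f xstar)

noncomputable def lyapunovEnergyDeriv (f : E → ℝ) (xstar : E) (p s : ℝ) (z w : E) : ℝ :=
  (1 - p / 2) * s ^ (p - 1) * ‖w‖ ^ 2 + p ^ 2 * (p / 2 - 1) * s ^ (p - 3) * ‖z - xstar‖ ^ 2
    + p * s ^ (p - 1) * (f z - f xstar - ⟪gradient f z, z - xstar⟫)

theorem hasDerivWithinAt_lyapunovEnergy (hf : DifferentiableAt ℝ f (x s)) (hs : 0 < s)
    (hpr : 2 * p = 1 + r) (hx : HasDerivWithinAt x (v s) S s) (hv : HasDerivWithinAt v (a s) S s)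
    (hode : a s + (r / s) • v s + gradient f (x s) = 0) :
    HasDerivWithinAt (lyapunovEnergy f xstar p x v)
      (lyapunovEnergyDeriv f xstar p s (x s) (v s)) S s := by
  have hpow (q : ℝ) : HasDerivWithinAt (· ^ q) (q * s ^ (q - 1)) S s :=
    (Real.hasDerivAt_rpow_const (Or.inl hs.ne')).hasDerivWithinAt
  have hfx : HasDerivWithinAt (fun t ↦ f (x t)) ⟪gradient f (x s), v s⟫ S s :=
    hf.hasGradientAt.hasFDerivAt.comp_hasDerivWithinAt s hx
  have hu : HasDerivWithinAt
      (fun t ↦ t ^ (p / 2) • v t + (p * t ^ (p / 2 - 1)) • (x t - xstar)) _ S s :=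
    ((hpow (p / 2)).smul hv).add (((hpow (p / 2 - 1)).const_mul p).smul (hx.sub_const xstar))
  have hE : HasDerivWithinAt (lyapunovEnergy f xstar p x v) _ S s :=
    (hu.norm_sq.const_mul (1 / 2)).add ((hpow p).mul (hfx.sub_const (f xstar)))
  convert hE using 1
  rw [add_assoc] at hode
  rw [eq_neg_of_add_eq_zero_left hode]
  obtain rfl : r = 2 * p - 1 := by linarith
  -- every power of `s` is a monomial in `s` and `q`, which turns the identity into a rational one
  set q := s ^ (p / 2 - 1)
  have e1 : s ^ (p / 2) = q * s := by rw [← Real.rpow_add_one hs.ne']; ring_nf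
  have e2 : s ^ (p / 2 - 1 - 1) = q / s := Real.rpow_sub_one hs.ne' _
  have e3 : s ^ (p - 1) = q * q * s := by
    rw [← Real.rpow_add hs, ← Real.rpow_add_one hs.ne']; ring_nf
  have e4 : s ^ p = q * q * s * s := by
    rw [← Real.rpow_add hs, ← Real.rpow_add_one hs.ne', ← Real.rpow_add_one hs.ne']; ring_nf
  have e5 : s ^ (p - 3) = q * q / s := by
    rw [← Real.rpow_add hs, ← Real.rpow_sub_one hs.ne']; ring_nf
  simp only [lyapunovEnergyDeriv, inner_add_left, inner_add_right, real_inner_smul_left,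
    real_inner_smul_right, inner_neg_right, real_inner_self_eq_norm_sq,
    real_inner_comm (gradient f (x s)) (x s - xstar), real_inner_comm (x s - xstar) (v s),
    real_inner_comm (gradient f (x s)) (v s), e1, e2, e3, e4, e5]
  field_simp
  ring

theorem lyapunovEnergyDeriv_nonpos {z w : E} (hs : 0 < s) (hp : 2 ≤ p)
    (hps : p * (p - 2) ≤ μ * s ^ 2)
    (hsc : μ / 2 * ‖xstar - z‖ ^ 2 ≤ f xstar - f z - ⟪gradient f z, xstar - z⟫) :
    lyapunovEnergyDeriv f xstar p s z w ≤ 0 := by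
  rw [norm_sub_rev, ← neg_sub z, inner_neg_right] at hsc
  have hgap : f z - f xstar - ⟪gradient f z, z - xstar⟫ ≤ -(μ / 2 * ‖z - xstar‖ ^ 2) := by
    linarith
  have hpow : s ^ (p - 1) = s ^ (p - 3) * s ^ 2 := by
    rw [← Real.rpow_natCast, ← Real.rpow_add hs]; congr 1; push_cast; ring
  have hs1 : 0 ≤ s ^ (p - 1) := by positivity
  have hw : (1 - p / 2) * s ^ (p - 1) * ‖w‖ ^ 2 ≤ 0 :=
    mul_nonpos_of_nonpos_of_nonneg (mul_nonpos_of_nonpos_of_nonneg (by linarith) hs1)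
      (sq_nonneg _)
  have hz : p ^ 2 * (p / 2 - 1) * s ^ (p - 3) * ‖z - xstar‖ ^ 2
      + p * s ^ (p - 1) * (-(μ / 2 * ‖z - xstar‖ ^ 2)) ≤ 0 := by
    have : 0 ≤ p / 2 * s ^ (p - 3) * ‖z - xstar‖ ^ 2 := by positivity
    rw [hpow]
    nlinarith
  unfold lyapunovEnergyDeriv
  nlinarith [mul_le_mul_of_nonneg_left hgap (mul_nonneg (by linarith : (0 : ℝ) ≤ p) hs1)]

theorem antitoneOn_lyapunovEnergy (hf : Differentiable ℝ f)
    (hsc : ∀ z y, μ / 2 * ‖y - z‖ ^ 2 ≤ f y - f z - ⟪gradient f z, y - z⟫)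
    (hT : 0 < T) (hp : 2 ≤ p) (hpT : p * (p - 2) ≤ μ * T ^ 2) (hpr : 2 * p = 1 + r)
    (hx : ∀ t ∈ Set.Ici T, HasDerivWithinAt x (v t) (Set.Ici T) t)
    (hv : ∀ t ∈ Set.Ici T, HasDerivWithinAt v (a t) (Set.Ici T) t)
    (hode : ∀ t ∈ Set.Ici T, a t + (r / t) • v t + gradient f (x t) = 0) :
    AntitoneOn (lyapunovEnergy f xstar p x v) (Set.Ici T) := by
  have hμ : 0 ≤ μ := by nlinarith [mul_pos hT hT]
  have hE (t : ℝ) (ht : t ∈ Set.Ici T) := hasDerivWithinAt_lyapunovEnergy (xstar := xstar)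
    (hf (x t)) (hT.trans_le ht) hpr (hx t ht) (hv t ht) (hode t ht)
  refine antitoneOn_of_hasDerivWithinAt_nonpos (convex_Ici T)
    (fun t ht ↦ (hE t ht).continuousWithinAt)
    (fun t ht ↦ (hE t (interior_subset ht)).mono interior_subset) fun t ht ↦ ?_
  replace ht : T ≤ t := interior_subset ht
  exact lyapunovEnergyDeriv_nonpos (hT.trans_le ht) hp (hpT.trans (by gcongr)) (hsc _ _)

theorem sub_le_lyapunovEnergy_mul_rpow_neg {t : ℝ} (hf : Differentiable ℝ f)
    (hsc : ∀ z y, μ / 2 * ‖y - z‖ ^ 2 ≤ f y - f z - ⟪gradient f z, y - z⟫)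
    (hT : 0 < T) (hp : 2 ≤ p) (hpT : p * (p - 2) ≤ μ * T ^ 2) (hpr : 2 * p = 1 + r)
    (hx : ∀ t ∈ Set.Ici T, HasDerivWithinAt x (v t) (Set.Ici T) t)
    (hv : ∀ t ∈ Set.Ici T, HasDerivWithinAt v (a t) (Set.Ici T) t)
    (hode : ∀ t ∈ Set.Ici T, a t + (r / t) • v t + gradient f (x t) = 0) (ht : T ≤ t) :
    f (x t) - f xstar ≤ lyapunovEnergy f xstar p x v T * t ^ (-p) := by
  have htp : 0 < t ^ p := Real.rpow_pos_of_pos (hT.trans_le ht) p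
  have hle_energy : t ^ p * (f (x t) - f xstar) ≤ lyapunovEnergy f xstar p x v t := by
    unfold lyapunovEnergy
    nlinarith [sq_nonneg ‖t ^ (p / 2) • v t + (p * t ^ (p / 2 - 1)) • (x t - xstar)‖]
  have hmono := antitoneOn_lyapunovEnergy (xstar := xstar) hf hsc hT hp hpT hpr hx hv hode
    Set.self_mem_Ici ht ht
  rw [Real.rpow_neg (hT.trans_le ht).le, ← div_eq_mul_inv, le_div_iff₀ htp]
  linarith

end

theorem Real.sqrt_rpow {t : ℝ} (ht : 0 ≤ t) (q : ℝ) : √(t ^ q) = t ^ (q / 2) := by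
  rw [Real.sqrt_eq_rpow, ← Real.rpow_mul ht]
  ring_nf

theorem stmt17_general (d : ℕ) (f : EuclideanSpace ℝ (Fin d) → ℝ) (μ : ℝ) (hμ : 0 < μ)
    (hf : ContDiff ℝ 2 f)
    (hsc : ∀ z y : EuclideanSpace ℝ (Fin d),
      μ / 2 * ‖y - z‖ ^ 2 ≤ f y - f z - ⟪gradient f z, y - z⟫)
    (xstar : EuclideanSpace ℝ (Fin d))
    (r : ℝ) (hr : 3 < r)
    (x v a : ℝ → EuclideanSpace ℝ (Fin d)) :
    let β : ℝ := (1 + r) / (2 * r)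
    let T : ℝ := Real.sqrt ((r - 3) * (r + 1) / (4 * μ))
    let D : ℝ → ℝ := fun t => t ^ ((1 + r) / 2)
    let B : ℝ → ℝ := fun t => Real.sqrt (β * r * ((1 - β) * r + 1) * t ^ (β * r - 2))
    let A : ℝ → ℝ := fun t => Real.sqrt (β * r / ((1 - β) * r + 1) * t ^ (β * r))
    let C : ℝ → ℝ := fun t => (1 - β * r / ((1 - β) * r + 1)) * t ^ (β * r)
    let L : ℝ → ℝ := fun t => 1 / 2 * ‖A t • v t + B t • (x t - xstar)‖ ^ 2
      + 1 / 2 * C t * ‖v t‖ ^ 2 + D t * (f (x t) - f xstar)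
    (∀ t ∈ Set.Ici T, HasDerivWithinAt x (v t) (Set.Ici T) t) →
    (∀ t ∈ Set.Ici T, HasDerivWithinAt v (a t) (Set.Ici T) t) →
    (∀ t ∈ Set.Ici T, a t + (r / t) • v t + gradient f (x t) = 0) →
    ∀ t ≥ T, f (x t) - f xstar ≤ L T * t ^ (-(1 + r) / 2) := by
  intro β T D B A C L hx hv hode t ht
  set p := (1 + r) / 2 with hp
  have hβr : β * r = p := by simp only [β, p]; field_simp
  have hβr' : (1 - β) * r + 1 = p := by simp only [β, p]; field_simp; ring
  have hT2 : T ^ 2 = (r - 3) * (r + 1) / (4 * μ) :=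
    Real.sq_sqrt (by apply div_nonneg <;> nlinarith)
  have hT : 0 < T := Real.sqrt_pos.2 (div_pos (by nlinarith) (by positivity))
  have hpT : p * (p - 2) = μ * T ^ 2 := by rw [hT2, hp]; field_simp; ring
  have hLT : L T = lyapunovEnergy f xstar p x v T := by
    simp only [L, A, B, C, D, ← hp, hβr, hβr', div_self (by positivity : p ≠ 0), sub_self,
      zero_mul, mul_zero, add_zero, one_mul, Real.sqrt_mul (mul_self_nonneg p),
      Real.sqrt_rpow hT.le, Real.sqrt_mul_self (by positivity : 0 ≤ p),
      show (p - 2) / 2 = p / 2 - 1 by ring]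
    rfl
  rw [hLT, show -(1 + r) / 2 = -p by ring]
  exact sub_le_lyapunovEnergy_mul_rpow_neg (hf.differentiable (by norm_num)) hsc hT
    (by linarith) hpT.le (by ring) hx hv hode ht

/-- for μ-strongly convex `f`, `α = 1` and `r > 3`, with
`β = (1+r)/(2r)` and `T = √((r−3)(r+1)/(4μ))`, along any solution of
`ẍ + (r/t)ẋ + ∇f(x) = 0` on `[T, ∞)` one has
`f(x(t)) − f* ≤ L(T)·t^{−(1+r)/2}`. -/
theorem stmt17 (d : ℕ) (f : EuclideanSpace ℝ (Fin d) → ℝ) (μ : ℝ) (hμ : 0 < μ)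
    (hf : ContDiff ℝ 2 f)
    (hsc : ∀ z y : EuclideanSpace ℝ (Fin d),
      μ / 2 * ‖y - z‖ ^ 2 ≤ f y - f z - ⟪gradient f z, y - z⟫)
    (xstar : EuclideanSpace ℝ (Fin d)) (hmin : ∀ y, f xstar ≤ f y)
    (r : ℝ) (hr : 3 < r)
    (x v a : ℝ → EuclideanSpace ℝ (Fin d)) :
    let β : ℝ := (1 + r) / (2 * r)
    let T : ℝ := Real.sqrt ((r - 3) * (r + 1) / (4 * μ))
    let D : ℝ → ℝ := fun t => t ^ ((1 + r) / 2)
    let B : ℝ → ℝ := fun t => Real.sqrt (β * r * ((1 - β) * r + 1) * t ^ (β * r - 2))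
    let A : ℝ → ℝ := fun t => Real.sqrt (β * r / ((1 - β) * r + 1) * t ^ (β * r))
    let C : ℝ → ℝ := fun t => (1 - β * r / ((1 - β) * r + 1)) * t ^ (β * r)
    let L : ℝ → ℝ := fun t => 1 / 2 * ‖A t • v t + B t • (x t - xstar)‖ ^ 2
      + 1 / 2 * C t * ‖v t‖ ^ 2 + D t * (f (x t) - f xstar)
    (∀ t ∈ Set.Ici T, HasDerivWithinAt x (v t) (Set.Ici T) t) →
    (∀ t ∈ Set.Ici T, HasDerivWithinAt v (a t) (Set.Ici T) t) →
    (∀ t ∈ Set.Ici T, a t + (r / t) • v t + gradient f (x t) = 0) →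
    ∀ t ≥ T, f (x t) - f xstar ≤ L T * t ^ (-(1 + r) / 2) :=
  stmt17_general d f μ hμ hf hsc xstar r hr x v a
end
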